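/- arXiv:2508.07411 — 13 statements merged into one kernel-verified Lean document; each statement's English description precedes it below -/
import Mathlib

section
/- Let p ≥ 1 and m > 0 be real numbers, let a < b be reals, and let f : [a,b] → ℝ be uniformly convex with modulus Φ(x) = m·x^p, i.e. t·f(x) + (1−t)·f(y) ≥ f(t·x + (1−t)·y) + t·(1−t)·m·|x−y|^p for all x, y ∈ [a,b] and t ∈ [0,1]. Let n ≥ 2 be an integer, let x₁,…,xₙ ∈ [a,b], and let α₁,…,αₙ ∈ (0,1) with Σ_{i=1}^n αᵢ = 1. Set x̄ = Σ_{i=1}^n αᵢxᵢ, c = Σ_{i=1}^n αᵢ f(xᵢ), α₀ = min_{1≤k≤n} αₖ, and T = (1−α₀)^{1−1/p} / (α₀^{1/p} · (α₀^{p−1} + (1−α₀)^{p−1})^{1/p}). Then max_{1≤k≤n} |xₖ − x̄| ≤ T · m^{−1/p} · (c − f(x̄))^{1/p}. -/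
lemma uc_convexOn (p m a b : ℝ) (hm : 0 < m)
    (f : ℝ → ℝ)
    (hf : ∀ x ∈ Set.Icc a b, ∀ y ∈ Set.Icc a b, ∀ t ∈ Set.Icc (0:ℝ) 1,
      f (t * x + (1 - t) * y) + t * (1 - t) * m * |x - y| ^ p
        ≤ t * f x + (1 - t) * f y) :
    ConvexOn ℝ (Set.Icc a b) f := by
  refine ⟨convex_Icc a b, fun x hx y hy s t hs ht hst => ?_⟩
  have h1 : (1 : ℝ) - s = t := by linarith
  have key := hf x hx y hy s ⟨hs, by linarith⟩
  rw [h1] at key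
  have hnn : 0 ≤ s * t * m * |x - y| ^ p := by
    have := Real.rpow_nonneg (abs_nonneg (x - y)) p
    positivity
  simp only [smul_eq_mul]
  linarith

set_option maxHeartbeats 2000000 in
lemma uc_false (p m a b : ℝ) (hp : 1 ≤ p) (hp2 : p < 2) (hm : 0 < m) (hab : a < b)
    (f : ℝ → ℝ)
    (hf : ∀ x ∈ Set.Icc a b, ∀ y ∈ Set.Icc a b, ∀ t ∈ Set.Icc (0:ℝ) 1,
      f (t * x + (1 - t) * y) + t * (1 - t) * m * |x - y| ^ p
        ≤ t * f x + (1 - t) * f y) : False := by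
  have conv := uc_convexOn p m a b hm f hf
  set L := b - a with hLdef
  have hL : 0 < L := by simp [hLdef]; linarith
  set c1 := a + L/4 with hc1
  set c2 := a + 3*L/4 with hc2
  set K : ℝ := (f b - f c2)/(L/4) - (f c1 - f a)/(L/4) with hK
  have main : ∀ N : ℕ, 2 ≤ N → ((N:ℝ) - 1) * (m * (L/N)^(p-1)) ≤ K := by
    intro N hN
    have hNpos : (0:ℝ) < N := by positivity
    set h := L/(2*N) with hh
    have hhpos : 0 < h := by positivity
    set t : ℕ → ℝ := fun j => c1 + j * h with ht
    have htN : t N = c2 := by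
      simp only [ht, hc1, hc2, hh]
      field_simp
      ring
    have hmem : ∀ j : ℕ, j ≤ N → t j ∈ Set.Icc a b := by
      intro j hj
      have h1 : (j:ℝ) * h ≤ (N:ℝ) * h := by
        have : (j:ℝ) ≤ N := by exact_mod_cast hj
        nlinarith
      have h2 : (N:ℝ) * h = L/2 := by
        rw [hh]; field_simp
      constructor
      · simp only [ht, hc1]; nlinarith
      · simp only [ht, hc1]; nlinarith [h1, h2, hL]
    have gap : ∀ j : ℕ, j + 2 ≤ N →
        m * (2*h)^p / 2 ≤ f (t j) + f (t (j+2)) - 2 * f (t (j+1)) := by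
      intro j hj
      have key := hf (t j) (hmem j (by omega)) (t (j+2)) (hmem (j+2) hj)
        (1/2) ⟨by norm_num, by norm_num⟩
      have hmid : (1/2 : ℝ) * t j + (1 - 1/2) * t (j+2) = t (j+1) := by
        simp only [ht]; push_cast; ring
      have habs : |t j - t (j+2)| = 2*h := by
        have : t j - t (j+2) = -(2*h) := by simp only [ht]; push_cast; ring
        rw [this, abs_neg, abs_of_pos (by positivity)]
      rw [hmid, habs] at key
      linarith
    set g : ℕ → ℝ := fun j => f (t (j+1)) - f (t j) with hg
    have tele : ∑ j ∈ Finset.range (N-1), (g (j+1) - g j) = g (N-1) - g 0 :=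
      Finset.sum_range_sub g (N-1)
    have sum_lb : ((N:ℝ) - 1) * (m * (2*h)^p / 2) ≤ g (N-1) - g 0 := by
      have hterm : ∀ j ∈ Finset.range (N-1), m * (2*h)^p / 2 ≤ g (j+1) - g j := by
        intro j hj
        rw [Finset.mem_range] at hj
        have := gap j (by omega)
        simp only [hg]
        linarith
      have hsum := Finset.card_nsmul_le_sum (Finset.range (N-1)) _ _ hterm
      rw [Finset.card_range, nsmul_eq_mul, tele] at hsum
      have hcast : ((N - 1 : ℕ) : ℝ) = (N:ℝ) - 1 := by
        push_cast [Nat.cast_sub (by omega : 1 ≤ N)]; ring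
      rwa [hcast] at hsum
    have lowb : (f c1 - f a)/(L/4) ≤ g 0 / h := by
      have := conv.slope_mono_adjacent (x := a) (y := c1) (z := t 1)
        (Set.left_mem_Icc.2 hab.le) (hmem 1 (by omega))
        (by simp [hc1]; linarith) (by simp only [ht]; push_cast; simp [hc1]; linarith)
      have e1 : c1 - a = L/4 := by simp [hc1]
      have e2 : t 1 - c1 = h := by simp only [ht]; push_cast; ring
      have e3 : t 0 = c1 := by simp [ht]
      rw [e1, e2] at this
      simpa [hg, e3] using this
    have highb : g (N-1) / h ≤ (f b - f c2)/(L/4) := by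
      have hmidlt : t (N-1) < c2 := by
        rw [← htN]
        simp only [ht]
        have : ((N:ℝ) - 1) < N := by linarith
        push_cast [Nat.cast_sub (by omega : 1 ≤ N)]
        nlinarith
      have hc2b : c2 < b := by simp [hc2, hLdef]; linarith
      have := conv.slope_mono_adjacent (x := t (N-1)) (y := c2) (z := b)
        (hmem (N-1) (by omega)) (Set.right_mem_Icc.2 hab.le) hmidlt hc2b
      have e1 : c2 - t (N-1) = h := by
        rw [← htN]
        simp only [ht]
        push_cast [Nat.cast_sub (by omega : 1 ≤ N)]
        ring
      have e2 : b - c2 = L/4 := by simp [hc2, hLdef]; ring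
      have e3 : (N-1) + 1 = N := by omega
      rw [e1, e2] at this
      simpa [hg, e3, htN] using this
    -- combine
    have hg0 : ((f c1 - f a)/(L/4)) * h ≤ g 0 := (le_div_iff₀ hhpos).1 lowb
    have hgN : g (N-1) ≤ ((f b - f c2)/(L/4)) * h := (div_le_iff₀ hhpos).1 highb
    have step : ((N:ℝ) - 1) * (m * (2*h)^p / 2) ≤ K * h := by
      rw [hK]; linarith
    have epow : (2*h)^p = (2*h) * (2*h)^(p-1) := by
      have h0 : (0:ℝ) < 2*h := by positivity
      have e := Real.rpow_add h0 1 (p-1)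
      rw [show (1:ℝ)+(p-1) = p by ring, Real.rpow_one] at e
      exact e
    have e2h : 2*h = L/(N:ℝ) := by rw [hh]; field_simp
    have final : (((N:ℝ)-1) * (m * (L/(N:ℝ))^(p-1))) * h ≤ K * h := by
      calc (((N:ℝ)-1) * (m * (L/(N:ℝ))^(p-1))) * h
          = ((N:ℝ) - 1) * (m * ((2*h) * (2*h)^(p-1)) / 2) := by
            rw [e2h, hh]; ring
        _ = ((N:ℝ) - 1) * (m * (2*h)^p / 2) := by rw [← epow]
        _ ≤ K * h := step
    exact le_of_mul_le_mul_right final hhpos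
  -- now derive the contradiction
  set q := 2 - p with hq'
  have hq : 0 < q := by simp [hq']; linarith
  set P := L^(p-1) with hP'
  have hPpos : 0 < P := Real.rpow_pos_of_pos hL _
  set C := max 1 (2*K/(m*P)) with hC'
  have hC1 : (1:ℝ) ≤ C := le_max_left _ _
  have hC0 : (0:ℝ) ≤ C := by linarith
  obtain ⟨N, hNgt⟩ := exists_nat_gt (max 2 (C^(1/q)))
  have hN2 : 2 ≤ N := by
    have : (2:ℝ) < N := lt_of_le_of_lt (le_max_left _ _) hNgt
    exact_mod_cast this.le
  have hNpos : (0:ℝ) < N := by positivity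
  have hNq : C < (N:ℝ)^q := by
    have h1 : C^(1/q) < N := lt_of_le_of_lt (le_max_right _ _) hNgt
    have h2 := Real.rpow_lt_rpow (Real.rpow_nonneg hC0 _) h1 hq
    rwa [← Real.rpow_mul hC0, one_div_mul_cancel hq.ne', Real.rpow_one] at h2
  set Q := (N:ℝ)^(p-1) with hQ'
  have hQpos : 0 < Q := Real.rpow_pos_of_pos hNpos _
  have hR : (N:ℝ)^q = (N:ℝ)/Q := by
    rw [hq', hQ', show (2:ℝ)-p = 1-(p-1) by ring, Real.rpow_sub hNpos, Real.rpow_one]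
  have hdiv : (L/(N:ℝ))^(p-1) = P/Q := by
    rw [hP', hQ', Real.div_rpow hL.le hNpos.le]
  have hmain := main N hN2
  rw [hdiv] at hmain
  have hNreal : (2:ℝ) ≤ N := by exact_mod_cast hN2
  have hmPpos : (0:ℝ) < m*P/2 := by
    have := mul_pos hm hPpos
    linarith
  have s1 : (N:ℝ)/2 * (m*(P/Q)) ≤ ((N:ℝ)-1) * (m*(P/Q)) := by
    apply mul_le_mul_of_nonneg_right (by linarith)
    have := div_pos hPpos hQpos
    have := mul_pos hm this
    linarith
  have s3 : m*P/2*C < m*P/2*((N:ℝ)^q) := mul_lt_mul_of_pos_left hNq hmPpos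
  have hCge : 2*K/(m*P) ≤ C := le_max_right _ _
  have s4 : K ≤ m*P/2*C := by
    have h5 := mul_le_mul_of_nonneg_left hCge hmPpos.le
    have hmP : m*P ≠ 0 := (mul_pos hm hPpos).ne'
    have e : m*P/2 * (2*K/(m*P)) = K := by
      field_simp
    linarith
  have s2 : m*P/2*((N:ℝ)^q) = (N:ℝ)/2 * (m*(P/Q)) := by rw [hR]; ring
  linarith


set_option maxHeartbeats 2000000 in
/-- Theorem 4 of the paper: deviation bound for uniformly convex `f` with
modulus `Φ(x) = m * x ^ p`. -/
theorem stmt_0 (p m a b : ℝ) (hp : 1 ≤ p) (hm : 0 < m) (hab : a < b)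
    (f : ℝ → ℝ)
    (hf : ∀ x ∈ Set.Icc a b, ∀ y ∈ Set.Icc a b, ∀ t ∈ Set.Icc (0:ℝ) 1,
      f (t * x + (1 - t) * y) + t * (1 - t) * m * |x - y| ^ p
        ≤ t * f x + (1 - t) * f y)
    (n : ℕ) (hn : 2 ≤ n) (x α : ℕ → ℝ)
    (hx : ∀ i ∈ Finset.Icc 1 n, x i ∈ Set.Icc a b)
    (hα : ∀ i ∈ Finset.Icc 1 n, α i ∈ Set.Ioo (0:ℝ) 1)
    (hαsum : ∑ i ∈ Finset.Icc 1 n, α i = 1)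
    (xbar c α₀ T : ℝ)
    (hxbar : xbar = ∑ i ∈ Finset.Icc 1 n, α i * x i)
    (hc : c = ∑ i ∈ Finset.Icc 1 n, α i * f (x i))
    (hα₀ : IsLeast (α '' (Set.Icc 1 n)) α₀)
    (hT : T = (1 - α₀) ^ (1 - 1/p) /
      (α₀ ^ (1/p) * (α₀ ^ (p-1) + (1 - α₀) ^ (p-1)) ^ (1/p))) :
    ∀ k ∈ Finset.Icc 1 n,
      |x k - xbar| ≤ T * m ^ (-(1/p)) * (c - f xbar) ^ (1/p) := by
  intro k hk
  by_cases hple : p < 2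
  · exact (uc_false p m a b hp hple hm hab f hf).elim
  push_neg at hple
  have conv := uc_convexOn p m a b hm f hf
  have hp0 : (0:ℝ) < p := by linarith
  obtain ⟨⟨i0, hi0set, hi0⟩, hlb⟩ := hα₀
  have hi0' : i0 ∈ Finset.Icc 1 n := by
    rw [Finset.mem_Icc]; rwa [Set.mem_Icc] at hi0set
  have hA : α₀ ∈ Set.Ioo (0:ℝ) 1 := hi0 ▸ hα i0 hi0'
  have hA0 : 0 < α₀ := hA.1
  have hA1 : α₀ < 1 := hA.2
  have hAk : α₀ ≤ α k := by
    refine hlb ⟨k, ?_, rfl⟩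
    rw [Set.mem_Icc]; rwa [Finset.mem_Icc] at hk
  set β := α k with hβ'
  have hβ : β ∈ Set.Ioo (0:ℝ) 1 := hα k hk
  have hβ0 : 0 < β := hβ.1
  have hβ1 : β < 1 := hβ.2
  have h1β : 0 < 1 - β := by linarith
  set S := (Finset.Icc 1 n).erase k with hS'
  have hsum' : ∑ i ∈ S, α i = 1 - β := by
    have h := Finset.sum_erase_add (Finset.Icc 1 n) α hk
    rw [hαsum] at h
    rw [hS']; linarith
  set y := (∑ i ∈ S, α i * x i)/(1-β) with hy'
  have hyw : y = ∑ i ∈ S, (α i/(1-β)) * x i := by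
    rw [hy', Finset.sum_div]
    exact Finset.sum_congr rfl (fun i _ => by ring)
  have hw0 : ∀ i ∈ S, 0 ≤ α i / (1-β) := fun i hi =>
    div_nonneg (hα i (Finset.mem_of_mem_erase hi)).1.le h1β.le
  have hw1 : ∑ i ∈ S, α i / (1-β) = 1 := by
    rw [← Finset.sum_div, hsum', div_self h1β.ne']
  have hwmem : ∀ i ∈ S, x i ∈ Set.Icc a b := fun i hi =>
    hx i (Finset.mem_of_mem_erase hi)
  have hymem : y ∈ Set.Icc a b := by
    rw [hyw]
    have := (convex_Icc a b).sum_mem (t := S) (w := fun i => α i/(1-β)) (z := x)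
      hw0 hw1 hwmem
    simpa [smul_eq_mul] using this
  have hxbar2 : xbar = β * x k + (1-β) * y := by
    have h := Finset.sum_erase_add (Finset.Icc 1 n) (fun i => α i * x i) hk
    rw [hxbar, ← h, hy', mul_div_cancel₀ _ h1β.ne']
    ring
  have hjen : f y ≤ ∑ i ∈ S, (α i/(1-β)) * f (x i) := by
    have h := conv.map_sum_le (t := S) (w := fun i => α i/(1-β)) (p := x)
      hw0 hw1 hwmem
    rw [hyw]
    simpa [smul_eq_mul] using h
  have hjen2 : (1-β) * f y ≤ ∑ i ∈ S, α i * f (x i) := by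
    have h := mul_le_mul_of_nonneg_left hjen h1β.le
    calc (1-β) * f y ≤ (1-β) * ∑ i ∈ S, (α i/(1-β)) * f (x i) := h
      _ = ∑ i ∈ S, α i * f (x i) := by
          rw [Finset.mul_sum]
          exact Finset.sum_congr rfl (fun i _ => by field_simp)
  have hcsplit : ∑ i ∈ S, α i * f (x i) = c - β * f (x k) := by
    have h := Finset.sum_erase_add (Finset.Icc 1 n) (fun i => α i * f (x i)) hk
    rw [hc]
    rw [hS']
    linarith
  have key := hf (x k) (hx k hk) y hymem β ⟨hβ0.le, hβ1.le⟩
  rw [← hxbar2] at key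
  set D := |x k - y| with hD'
  have hDnn : 0 ≤ D := abs_nonneg _
  have hclow : f xbar + β*(1-β)*m*D^p ≤ c := by
    rw [hcsplit] at hjen2
    linarith
  set d := |x k - xbar| with hd'
  have hdnn : 0 ≤ d := abs_nonneg _
  have hdD : d = (1-β) * D := by
    rw [hd', hD']
    have e : x k - xbar = (1-β) * (x k - y) := by rw [hxbar2]; ring
    rw [e, abs_mul, abs_of_pos h1β]
  have hDpnn : 0 ≤ D^p := Real.rpow_nonneg hDnn p
  have hmod : 0 ≤ β*(1-β)*m*D^p := by positivity
  have hcf : 0 ≤ c - f xbar := by linarith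
  have hdp : d^p = (1-β)^p * D^p := by rw [hdD, Real.mul_rpow h1β.le hDnn]
  have e1β : (1-β)^p = (1-β) * (1-β)^(p-1) := by
    have e := Real.rpow_add h1β 1 (p-1)
    rw [show (1:ℝ)+(p-1) = p by ring, Real.rpow_one] at e
    exact e
  have hstep : d^p ≤ (1-β)^(p-1)/β * ((c - f xbar)/m) := by
    rw [hdp]
    have h2 : β*(1-β)*D^p ≤ (c - f xbar)/m := by
      rw [le_div_iff₀ hm]
      linarith
    calc (1-β)^p * D^p = (1-β)^(p-1)/β * (β*(1-β)*D^p) := by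
          rw [e1β]; field_simp
      _ ≤ (1-β)^(p-1)/β * ((c - f xbar)/m) := by
          apply mul_le_mul_of_nonneg_left h2
          exact div_nonneg (Real.rpow_nonneg h1β.le _) hβ0.le
  -- constant comparison
  set s1 := α₀^(p-1) + (1-α₀)^(p-1) with hs1'
  have h1A : 0 < 1 - α₀ := by linarith
  have hs1pos : 0 < s1 := add_pos (Real.rpow_pos_of_pos hA0 _) (Real.rpow_pos_of_pos h1A _)
  have hT0 : 0 ≤ T := by
    rw [hT]
    have := Real.rpow_pos_of_pos h1A (1-1/p)
    have := Real.rpow_pos_of_pos hA0 (1/p)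
    have := Real.rpow_pos_of_pos hs1pos (1/p)
    positivity
  have hTp : T^p = (1-α₀)^(p-1) / (α₀ * s1) := by
    rw [hT, Real.div_rpow (Real.rpow_nonneg h1A.le _)
      (mul_nonneg (Real.rpow_nonneg hA0.le _) (Real.rpow_nonneg hs1pos.le _)),
      Real.mul_rpow (Real.rpow_nonneg hA0.le _) (Real.rpow_nonneg hs1pos.le _),
      ← Real.rpow_mul h1A.le, ← Real.rpow_mul hA0.le, ← Real.rpow_mul hs1pos.le]
    rw [show (1-1/p)*p = p-1 by field_simp, show (1/p)*p = 1 by field_simp,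
      Real.rpow_one, Real.rpow_one]
  have hs1le : s1 ≤ 1 := by
    have h1 : α₀^(p-1) ≤ α₀ := by
      have := Real.rpow_le_rpow_of_exponent_ge hA0 hA1.le (show (1:ℝ) ≤ p-1 by linarith)
      rwa [Real.rpow_one] at this
    have h2 : (1-α₀)^(p-1) ≤ 1-α₀ := by
      have := Real.rpow_le_rpow_of_exponent_ge h1A (by linarith) (show (1:ℝ) ≤ p-1 by linarith)
      rwa [Real.rpow_one] at this
    rw [hs1']; linarith
  have hTplow : (1-β)^(p-1)/β ≤ T^p := by
    rw [hTp]
    have n1 : (1-β)^(p-1) ≤ (1-α₀)^(p-1) :=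
      Real.rpow_le_rpow (by linarith) (by linarith) (by linarith)
    have d1 : (1-β)^(p-1)/β ≤ (1-α₀)^(p-1)/α₀ :=
      div_le_div₀ (Real.rpow_nonneg h1A.le _) n1 hA0 hAk
    have d2 : (1-α₀)^(p-1)/α₀ ≤ (1-α₀)^(p-1)/(α₀ * s1) := by
      rw [div_le_div_iff₀ hA0 (mul_pos hA0 hs1pos)]
      have hXA : 0 ≤ (1-α₀)^(p-1) * α₀ := mul_nonneg (Real.rpow_nonneg h1A.le _) hA0.le
      nlinarith [mul_le_mul_of_nonneg_left hs1le hXA]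
    linarith
  have hstep2 : d^p ≤ T^p * ((c - f xbar)/m) :=
    le_trans hstep (mul_le_mul_of_nonneg_right hTplow (div_nonneg hcf hm.le))
  have hfinal := Real.rpow_le_rpow (Real.rpow_nonneg hdnn p) hstep2
    (le_of_lt (by positivity : (0:ℝ) < 1/p))
  have eL : (d^p)^(1/p) = d := by
    rw [← Real.rpow_mul hdnn, mul_one_div, div_self hp0.ne', Real.rpow_one]
  have eR : (T^p * ((c - f xbar)/m))^(1/p)
      = T * ((c - f xbar)^(1/p) * m^(-(1/p))) := by
    rw [Real.mul_rpow (Real.rpow_nonneg hT0 _) (div_nonneg hcf hm.le),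
      ← Real.rpow_mul hT0, mul_one_div, div_self hp0.ne', Real.rpow_one,
      Real.div_rpow hcf hm.le, Real.rpow_neg hm.le, div_eq_mul_inv]
  rw [eL, eR] at hfinal
  rw [show T * m^(-(1/p)) * (c - f xbar)^(1/p)
    = T * ((c - f xbar)^(1/p) * m^(-(1/p))) by ring]
  exact hfinal
end

section
/- Let p ≥ 1 be a real number, let n ≥ 2 be an integer, let x₁,…,xₙ be real numbers, and let α₁,…,αₙ ∈ (0,1) with Σ_{i=1}^n αᵢ = 1. Set x̄ = Σ_{i=1}^n αᵢxᵢ, α₀ = min_{1≤k≤n} αₖ, and T = (1−α₀)^{1−1/p} / (α₀^{1/p} · (α₀^{p−1} + (1−α₀)^{p−1})^{1/p}). Then max_{1≤k≤n} |xₖ − x̄| ≤ T · (Σ_{i=1}^n αᵢ|xᵢ − x̄|^p)^{1/p}. -/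
set_option maxHeartbeats 1600000 in
/-- Purely combinatorial weighted deviation bound. -/
theorem stmt_1 (p : ℝ) (hp : 1 ≤ p) (n : ℕ) (hn : 2 ≤ n) (x α : ℕ → ℝ)
    (hα : ∀ i ∈ Finset.Icc 1 n, α i ∈ Set.Ioo (0:ℝ) 1)
    (hαsum : ∑ i ∈ Finset.Icc 1 n, α i = 1)
    (xbar α₀ T : ℝ)
    (hxbar : xbar = ∑ i ∈ Finset.Icc 1 n, α i * x i)
    (hα₀ : IsLeast (α '' (Set.Icc 1 n)) α₀)
    (hT : T = (1 - α₀) ^ (1 - 1/p) /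
      (α₀ ^ (1/p) * (α₀ ^ (p-1) + (1 - α₀) ^ (p-1)) ^ (1/p))) :
    ∀ k ∈ Finset.Icc 1 n,
      |x k - xbar| ≤ T * (∑ i ∈ Finset.Icc 1 n, α i * |x i - xbar| ^ p) ^ (1/p) := by
  intro k hk
  have hppos : (0:ℝ) < p := lt_of_lt_of_le one_pos hp
  have hpne : p ≠ 0 := ne_of_gt hppos
  set I := Finset.Icc 1 n with hI
  -- facts about α₀
  obtain ⟨⟨m, hm, hmα⟩, hlb⟩ := hα₀
  have hmI : m ∈ I := by simpa [hI, Finset.mem_Icc] using hm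
  have hα₀mem : α₀ ∈ Set.Ioo (0:ℝ) 1 := hmα ▸ hα m hmI
  obtain ⟨hα₀pos, hα₀lt⟩ := hα₀mem
  obtain ⟨hαkpos, hαklt⟩ := hα k hk
  have hα₀k : α₀ ≤ α k := hlb ⟨k, by simpa [hI, Finset.mem_Icc] using hk, rfl⟩
  set S := ∑ i ∈ I, α i * |x i - xbar| ^ p with hSdef
  have hS0 : 0 ≤ S := Finset.sum_nonneg fun i hi =>
    mul_nonneg (le_of_lt (hα i hi).1)
      (Real.rpow_nonneg (abs_nonneg _) p)
  set d : ℕ → ℝ := fun i => |x i - xbar| with hd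
  set c : ℝ := 1 - α k with hc
  have hcpos : 0 < c := by simp only [hc]; linarith
  set s := I.erase k with hs
  have hsum0 : ∑ i ∈ I, α i * (x i - xbar) = 0 := by
    simp only [mul_sub]
    rw [Finset.sum_sub_distrib, ← hxbar, ← Finset.sum_mul, hαsum, one_mul, sub_self]
  have hsplit : ∀ (f : ℕ → ℝ), ∑ i ∈ I, f i = f k + ∑ i ∈ s, f i := by
    intro f
    rw [hs, Finset.add_sum_erase _ _ hk]
  have hsums : ∑ i ∈ s, α i * (x i - xbar) = -(α k * (x k - xbar)) := by
    have := hsplit (fun i => α i * (x i - xbar))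
    rw [hsum0] at this; linarith
  have hsumα : ∑ i ∈ s, α i = c := by
    have := hsplit α
    rw [hαsum] at this; rw [hc]; linarith
  have hαnn : ∀ i ∈ s, 0 ≤ α i := fun i hi =>
    le_of_lt (hα i (Finset.mem_of_mem_erase hi)).1
  -- step 1 : α k * d k ≤ ∑ s α i * d i
  have step1 : α k * d k ≤ ∑ i ∈ s, α i * d i := by
    calc α k * d k = |α k * (x k - xbar)| := by
          rw [abs_mul, abs_of_pos hαkpos]
      _ = |∑ i ∈ s, α i * (x i - xbar)| := by rw [hsums, abs_neg]
      _ ≤ ∑ i ∈ s, |α i * (x i - xbar)| := Finset.abs_sum_le_sum_abs _ _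
      _ = ∑ i ∈ s, α i * d i := by
          apply Finset.sum_congr rfl
          intro i hi
          rw [abs_mul, abs_of_nonneg (hαnn i hi)]
  -- step 2 : power mean
  have step2 : (∑ i ∈ s, (α i / c) * d i) ^ p ≤ ∑ i ∈ s, (α i / c) * d i ^ p := by
    apply Real.rpow_arith_mean_le_arith_mean_rpow s (fun i => α i / c) d
    · exact fun i hi => div_nonneg (hαnn i hi) hcpos.le
    · rw [← Finset.sum_div, hsumα, div_self hcpos.ne']
    · exact fun i hi => abs_nonneg _
    · exact hp
  have hsrw : ∑ i ∈ s, (α i / c) * d i = (∑ i ∈ s, α i * d i) / c := by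
    rw [Finset.sum_div]; exact Finset.sum_congr rfl fun i _ => by ring
  have hSI : S = ∑ i ∈ I, α i * d i ^ p := rfl
  have hSs : ∑ i ∈ s, α i * d i ^ p = S - α k * d k ^ p := by
    have := hsplit (fun i => α i * d i ^ p)
    rw [hSI]; linarith
  have hsrw2 : ∑ i ∈ s, (α i / c) * d i ^ p = (S - α k * d k ^ p) / c := by
    rw [← hSs, Finset.sum_div]
    exact Finset.sum_congr rfl fun i _ => by ring
  have hdk0 : 0 ≤ d k := abs_nonneg _
  have hlhs : (α k * d k / c) ^ p ≤ (S - α k * d k ^ p) / c := by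
    calc (α k * d k / c) ^ p ≤ ((∑ i ∈ s, α i * d i) / c) ^ p := by
          apply Real.rpow_le_rpow (by positivity) (by gcongr) hppos.le
      _ = (∑ i ∈ s, (α i / c) * d i) ^ p := by rw [hsrw]
      _ ≤ ∑ i ∈ s, (α i / c) * d i ^ p := step2
      _ = (S - α k * d k ^ p) / c := hsrw2
  -- key : α k ^ p * d k ^ p ≤ (S - α k * d k ^ p) * c ^ (p-1)
  have hcp1 : (0:ℝ) < c ^ (p-1) := Real.rpow_pos_of_pos hcpos _
  have hcpc : c ^ p = c ^ (p-1) * c := by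
    rw [← Real.rpow_add_one hcpos.ne' (p-1)]; ring_nf
  have key : α k ^ p * d k ^ p ≤ (S - α k * d k ^ p) * c ^ (p-1) := by
    have h1 : (α k * d k) ^ p / c ^ p ≤ (S - α k * d k ^ p) / c := by
      rw [← Real.div_rpow (by positivity) hcpos.le]; exact hlhs
    rw [div_le_div_iff₀ (Real.rpow_pos_of_pos hcpos p) hcpos] at h1
    rw [Real.mul_rpow hαkpos.le hdk0] at h1
    rw [hcpc] at h1
    nlinarith [h1]
  -- divide by c^(p-1)
  have keyk : d k ^ p * (α k ^ p / c ^ (p-1) + α k) ≤ S := by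
    have h2 : α k ^ p * d k ^ p + α k * d k ^ p * c ^ (p-1) ≤ S * c ^ (p-1) := by
      nlinarith [key]
    have h3 : d k ^ p * (α k ^ p / c ^ (p-1) + α k) * c ^ (p-1)
        = α k ^ p * d k ^ p + α k * d k ^ p * c ^ (p-1) := by
      field_simp
    exact le_of_mul_le_mul_right (by rw [h3]; exact h2) hcp1
  -- monotonicity
  have hApos : (0:ℝ) < 1 - α₀ := by linarith
  set G : ℝ := α₀ ^ p / (1 - α₀) ^ (p-1) + α₀ with hGdef
  have hA1 : (0:ℝ) < (1 - α₀) ^ (p-1) := Real.rpow_pos_of_pos hApos _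
  have hG0 : 0 < G := by
    rw [hGdef]
    have := Real.rpow_pos_of_pos hα₀pos p
    positivity
  have hmono : G ≤ α k ^ p / c ^ (p-1) + α k := by
    rw [hGdef]
    have h1 : α₀ ^ p ≤ α k ^ p := Real.rpow_le_rpow hα₀pos.le hα₀k hppos.le
    have h2 : c ^ (p-1) ≤ (1 - α₀) ^ (p-1) :=
      Real.rpow_le_rpow hcpos.le (by rw [hc]; linarith) (by linarith)
    have h3 : α₀ ^ p / (1 - α₀) ^ (p-1) ≤ α k ^ p / c ^ (p-1) :=
      div_le_div₀ (Real.rpow_nonneg hαkpos.le p) h1 hcp1 h2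
    linarith
  have key0 : d k ^ p * G ≤ S :=
    le_trans (mul_le_mul_of_nonneg_left hmono (Real.rpow_nonneg hdk0 p)) keyk
  -- compute T^p
  have hBpos : (0:ℝ) < α₀ ^ (p-1) + (1 - α₀) ^ (p-1) :=
    add_pos (Real.rpow_pos_of_pos hα₀pos _) hA1
  have hT0 : 0 < T := by
    rw [hT]
    exact div_pos (Real.rpow_pos_of_pos hApos _)
      (mul_pos (Real.rpow_pos_of_pos hα₀pos _) (Real.rpow_pos_of_pos hBpos _))
  have hTpow : T ^ p = (1 - α₀) ^ (p-1) / (α₀ * (α₀ ^ (p-1) + (1 - α₀) ^ (p-1))) := by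
    rw [hT, Real.div_rpow (Real.rpow_nonneg hApos.le _)
      (mul_nonneg (Real.rpow_nonneg hα₀pos.le _) (Real.rpow_nonneg hBpos.le _)),
      Real.mul_rpow (Real.rpow_nonneg hα₀pos.le _) (Real.rpow_nonneg hBpos.le _),
      ← Real.rpow_mul hApos.le, ← Real.rpow_mul hα₀pos.le, ← Real.rpow_mul hBpos.le]
    have e2 : (1/p) * p = 1 := by rw [one_div, inv_mul_cancel₀ hpne]
    have e1 : (1 - 1/p) * p = p - 1 := by rw [sub_mul, one_mul, e2]
    rw [e1, e2, Real.rpow_one, Real.rpow_one]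
  have hα₀p : α₀ ^ p = α₀ * α₀ ^ (p-1) := by
    have : α₀ ^ p = α₀ ^ (1 + (p-1)) := by ring_nf
    rw [this, Real.rpow_add hα₀pos, Real.rpow_one]
  have hTG : T ^ p * G = 1 := by
    rw [hTpow, hGdef, hα₀p, div_add' _ _ _ hA1.ne', div_mul_div_comm,
      div_eq_one_iff_eq (mul_ne_zero (mul_ne_zero hα₀pos.ne' hBpos.ne') hA1.ne')]
    ring
  -- conclude
  have hTp : T ^ p = 1 / G := by rw [eq_div_iff hG0.ne']; exact hTG
  have hdkp : d k ^ p ≤ T ^ p * S := by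
    rw [hTp, div_mul_eq_mul_div, one_mul, le_div_iff₀ hG0]
    exact key0
  have final : d k ≤ T * S ^ (1/p) := by
    have h1 : (d k ^ p) ^ (1/p) ≤ (T ^ p * S) ^ (1/p) :=
      Real.rpow_le_rpow (Real.rpow_nonneg hdk0 p) hdkp (by positivity)
    have h2 : (d k ^ p) ^ (1/p) = d k := by
      rw [← Real.rpow_mul hdk0]
      have : p * (1/p) = 1 := mul_one_div_cancel hpne
      rw [this, Real.rpow_one]
    have h3 : (T ^ p * S) ^ (1/p) = T * S ^ (1/p) := by
      rw [Real.mul_rpow (Real.rpow_nonneg hT0.le p) hS0, ← Real.rpow_mul hT0.le]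
      have : p * (1/p) = 1 := mul_one_div_cancel hpne
      rw [this, Real.rpow_one]
    rw [h2, h3] at h1
    exact h1
  exact final
end

section
/- Let p ≥ 1 be a real number, let n ≥ 2 be an integer, let y₁,…,yₙ be real numbers, and let α₁,…,αₙ ∈ (0,1) with Σ_{i=1}^n αᵢ = 1 and Σ_{i=1}^n αᵢyᵢ = 0. Then αₙ·(αₙ^{p−1} + (1−αₙ)^{p−1})·|yₙ|^p ≤ (1−αₙ)^{p−1} · Σ_{i=1}^n αᵢ|yᵢ|^p. -/
/-- Hölder-type deviation inequality for a zero-mean weighted sequence. -/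
theorem stmt_2 (p : ℝ) (hp : 1 ≤ p) (n : ℕ) (hn : 2 ≤ n) (y α : ℕ → ℝ)
    (hα : ∀ i ∈ Finset.Icc 1 n, α i ∈ Set.Ioo (0:ℝ) 1)
    (hαsum : ∑ i ∈ Finset.Icc 1 n, α i = 1)
    (hzero : ∑ i ∈ Finset.Icc 1 n, α i * y i = 0) :
    α n * (α n ^ (p-1) + (1 - α n) ^ (p-1)) * |y n| ^ p
      ≤ (1 - α n) ^ (p-1) * ∑ i ∈ Finset.Icc 1 n, α i * |y i| ^ p := by
  obtain ⟨m, rfl⟩ : ∃ m, n = m + 1 := ⟨n - 1, by omega⟩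
  have hm1 : 1 ≤ m + 1 := by omega
  have hnmem : m + 1 ∈ Finset.Icc 1 (m + 1) := by simp
  obtain ⟨hA0, hA1⟩ := hα _ hnmem
  set A := α (m + 1) with hAdef
  set c := 1 - A with hcdef
  have hc0 : 0 < c := by simp [hcdef]; linarith
  have hsplit : ∀ f : ℕ → ℝ, ∑ i ∈ Finset.Icc 1 (m+1), f i
      = (∑ i ∈ Finset.Icc 1 m, f i) + f (m+1) := fun f =>
    Finset.sum_Icc_succ_top (by omega) f
  have hmem : ∀ i ∈ Finset.Icc 1 m, i ∈ Finset.Icc 1 (m+1) := by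
    intro i hi; simp at hi ⊢; omega
  have hcsum : ∑ i ∈ Finset.Icc 1 m, α i = c := by
    have := hsplit α; rw [hαsum] at this; linarith [this]
  have hS : A * y (m+1) = -(∑ i ∈ Finset.Icc 1 m, α i * y i) := by
    have := hsplit (fun i => α i * y i); rw [hzero] at this; linarith [this]
  set T := ∑ i ∈ Finset.Icc 1 m, α i * |y i| with hTdef
  have hT0 : 0 ≤ T :=
    Finset.sum_nonneg fun i hi => mul_nonneg (hα i (hmem i hi)).1.le (abs_nonneg _)
  have hAy : A * |y (m+1)| ≤ T := by
    have : A * |y (m+1)| = |∑ i ∈ Finset.Icc 1 m, α i * y i| := by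
      rw [← abs_of_pos hA0, ← abs_mul, hS, abs_neg]
    rw [this]
    refine (Finset.abs_sum_le_sum_abs _ _).trans ?_
    refine Finset.sum_le_sum fun i hi => ?_
    rw [abs_mul, abs_of_pos (hα i (hmem i hi)).1]
  -- Hölder / power mean step
  have hhold : T ^ p ≤ c ^ (p - 1) * ∑ i ∈ Finset.Icc 1 m, α i * |y i| ^ p := by
    have key := Real.rpow_arith_mean_le_arith_mean_rpow (Finset.Icc 1 m)
      (fun i => α i / c) (fun i => |y i|)
      (fun i hi => div_nonneg (hα i (hmem i hi)).1.le hc0.le)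
      (by rw [← Finset.sum_div, hcsum, div_self hc0.ne'])
      (fun i hi => abs_nonneg _) hp
    have h1 : (∑ i ∈ Finset.Icc 1 m, α i / c * |y i|) = T / c := by
      rw [hTdef, Finset.sum_div]
      exact Finset.sum_congr rfl fun i hi => by ring
    have h2 : (∑ i ∈ Finset.Icc 1 m, α i / c * |y i| ^ p)
        = (∑ i ∈ Finset.Icc 1 m, α i * |y i| ^ p) / c := by
      rw [Finset.sum_div]; exact Finset.sum_congr rfl fun i hi => by ring
    rw [h1, h2, Real.div_rpow hT0 hc0.le] at key
    have hcp : (0:ℝ) < c ^ p := Real.rpow_pos_of_pos hc0 p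
    rw [div_le_div_iff₀ hcp hc0] at key
    calc T ^ p = T ^ p * c / c := by field_simp
      _ ≤ (∑ i ∈ Finset.Icc 1 m, α i * |y i| ^ p) * c ^ p / c := by
          gcongr
      _ = c ^ (p-1) * ∑ i ∈ Finset.Icc 1 m, α i * |y i| ^ p := by
          rw [Real.rpow_sub hc0, Real.rpow_one]; field_simp
  have hAp : A ^ p * |y (m+1)| ^ p ≤ c ^ (p-1) * ∑ i ∈ Finset.Icc 1 m, α i * |y i| ^ p := by
    rw [← Real.mul_rpow hA0.le (abs_nonneg _)]
    exact le_trans (Real.rpow_le_rpow (mul_nonneg hA0.le (abs_nonneg _)) hAy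
      (by linarith)) hhold
  have hApow : A * A ^ (p-1) = A ^ p := by
    rw [← Real.rpow_one_add' hA0.le (by intro h; linarith [hp, h])]
    ring_nf
  rw [hsplit (fun i => α i * |y i| ^ p)]
  have expand : A * (A ^ (p-1) + c ^ (p-1)) * |y (m+1)| ^ p
      = A ^ p * |y (m+1)| ^ p + c ^ (p-1) * (A * |y (m+1)| ^ p) := by
    rw [← hApow]; ring
  rw [expand, mul_add]
  linarith [hAp]
end

section
/- For every fixed real p ≥ 1, the function α ↦ (1−α)^{p−1} / (α·(α^{p−1} + (1−α)^{p−1})) is decreasing on the open interval (0,1). -/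
/-- For fixed real `p ≥ 1`, the map
`α ↦ (1-α)^(p-1) / (α * (α^(p-1) + (1-α)^(p-1)))` is decreasing on `(0,1)`. -/
theorem stmt_3 (p : ℝ) (hp : 1 ≤ p) :
    AntitoneOn (fun α : ℝ =>
      (1 - α) ^ (p-1) / (α * (α ^ (p-1) + (1 - α) ^ (p-1)))) (Set.Ioo 0 1) := by
  intro x hx y hy hxy
  obtain ⟨hx0, hx1⟩ := hx
  obtain ⟨hy0, hy1⟩ := hy
  have h1x : (0:ℝ) < 1 - x := by linarith
  have h1y : (0:ℝ) < 1 - y := by linarith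
  have hq : 0 ≤ p - 1 := by linarith
  have key : ∀ a : ℝ, 0 < a → a < 1 →
      (1-a)^(p-1) / (a * (a^(p-1) + (1-a)^(p-1))) = 1 / (a * ((a/(1-a))^(p-1) + 1)) := by
    intro a ha0 ha1
    have h1 : (0:ℝ) < 1 - a := by linarith
    have hpa : (0:ℝ) < a ^ (p-1) := Real.rpow_pos_of_pos ha0 _
    have hpb : (0:ℝ) < (1-a) ^ (p-1) := Real.rpow_pos_of_pos h1 _
    rw [Real.div_rpow ha0.le h1.le]
    field_simp
  simp only
  rw [key x hx0 hx1, key y hy0 hy1]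
  apply one_div_le_one_div_of_le
  · positivity
  · gcongr
end

section
/- Let a < b be reals and let Φ : [0,∞) → [0,∞) be convex, strictly increasing and continuous with Φ(0) = 0 and Φ(A·B) ≤ Φ(A)·Φ(B) for all A > 0, B > 0. Let f : [a,b) → ℝ be uniformly convex with modulus Φ, i.e. t·f(x) + (1−t)·f(y) ≥ f(t·x + (1−t)·y) + t·(1−t)·Φ(|x−y|) for all x, y ∈ [a,b) and t ∈ [0,1]. Let n ≥ 2 be an integer, let x₁,…,xₙ ∈ [a,b), and set x̄ = (1/n)·Σ_{i=1}^n xᵢ and d = (1/n)·Σ_{i=1}^n f(xᵢ). Then max_{1≤k≤n} Φ(|xₖ − x̄|) ≤ (n·Φ(n−1)/(n−1+Φ(n−1))) · (1/n)·Σ_{i=1}^n Φ(|xᵢ − x̄|) ≤ (n·Φ(n−1)/(n−1+Φ(n−1))) · (d − f(x̄)). -/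
/-!
The second inequality is Jensen's inequality for uniformly convex functions. With `c` the mean,
the contracted points `c + τ (xᵢ - c)` still have mean `c`, so by plain convexity their average
`f`-value is at least `f c`; bounding each of them by uniform convexity leaves
`(1 - τ) · avg Φ(|xᵢ - c|) ≤ avg f(xᵢ) - f(c)` for every `τ ∈ (0, 1)`, and one lets `τ → 0`.

The first one only uses that the deviations `uᵢ = xᵢ - x̄` sum to zero: then
`|u_k| ≤ Σ_{i ≠ k} |uᵢ|`, and Jensen for `Φ` together with submultiplicativity give
`(n - 1) Φ(|u_k|) ≤ Φ(n - 1) Σ_{i ≠ k} Φ(|uᵢ|)`; adding `Φ(n - 1) Φ(|u_k|)` to both sides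
yields the bound.
-/

open Finset Filter Topology

section UniformConvex

variable {E : Type*} [NormedAddCommGroup E] [NormedSpace ℝ E] {s : Set E} {φ : ℝ → ℝ} {f : E → ℝ}

lemma UniformConvexOn.convexOn_of_nonneg (hf : UniformConvexOn s φ f)
    (hφ : ∀ r, 0 ≤ r → 0 ≤ φ r) : ConvexOn ℝ s f := by
  refine ⟨hf.1, fun x hx y hy a b ha hb hab => (hf.2 hx hy ha hb hab).trans (sub_le_self _ ?_)⟩
  have := hφ ‖x - y‖ (norm_nonneg _)
  positivity

lemma UniformConvexOn.one_sub_mul_sum_le {ι : Type*} {t : Finset ι} {w : ι → ℝ} {p : ι → E}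
    (hf : UniformConvexOn s φ f) (hφ : ∀ r, 0 ≤ r → 0 ≤ φ r) (hw₀ : ∀ i ∈ t, 0 ≤ w i)
    (hw₁ : ∑ i ∈ t, w i = 1) (hp : ∀ i ∈ t, p i ∈ s) {τ : ℝ} (hτ : τ ∈ Set.Ioo (0 : ℝ) 1) :
    (1 - τ) * ∑ i ∈ t, w i * φ ‖p i - ∑ j ∈ t, w j • p j‖
      ≤ ∑ i ∈ t, w i * f (p i) - f (∑ j ∈ t, w j • p j) := by
  set c := ∑ j ∈ t, w j • p j
  obtain ⟨hτ₀, hτ₁⟩ := hτ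
  have hc : c ∈ s := hf.1.sum_mem hw₀ hw₁ hp
  have hq : ∀ i ∈ t, τ • p i + (1 - τ) • c ∈ s := fun i hi =>
    hf.1 (hp i hi) hc hτ₀.le (by linarith) (by ring)
  have hmean : ∑ i ∈ t, w i • (τ • p i + (1 - τ) • c) = c := by
    simp only [smul_add, smul_comm (w _) τ, smul_comm (w _) (1 - τ), sum_add_distrib,
      ← smul_sum, ← sum_smul, hw₁, one_smul]
    module
  have hjensen : f c ≤ ∑ i ∈ t, w i * f (τ • p i + (1 - τ) • c) := by
    simpa only [hmean, smul_eq_mul] using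
      (hf.convexOn_of_nonneg hφ).map_sum_le hw₀ hw₁ hq
  have hpointwise : ∀ i ∈ t, w i * f (τ • p i + (1 - τ) • c)
      ≤ w i * (τ * f (p i) + (1 - τ) * f c - τ * (1 - τ) * φ ‖p i - c‖) := fun i hi =>
    mul_le_mul_of_nonneg_left (hf.2 (hp i hi) hc hτ₀.le (by linarith) (by ring)) (hw₀ i hi)
  have hsum := hjensen.trans (sum_le_sum hpointwise)
  simp only [mul_sub, mul_add, sum_sub_distrib, sum_add_distrib, mul_left_comm (w _),
    ← mul_sum, ← sum_mul, hw₁, one_mul] at hsum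
  nlinarith

lemma UniformConvexOn.map_sum_add_sum_le {ι : Type*} {t : Finset ι} {w : ι → ℝ} {p : ι → E}
    (hf : UniformConvexOn s φ f) (hφ : ∀ r, 0 ≤ r → 0 ≤ φ r) (hw₀ : ∀ i ∈ t, 0 ≤ w i)
    (hw₁ : ∑ i ∈ t, w i = 1) (hp : ∀ i ∈ t, p i ∈ s) :
    f (∑ j ∈ t, w j • p j) + ∑ i ∈ t, w i * φ ‖p i - ∑ j ∈ t, w j • p j‖
      ≤ ∑ i ∈ t, w i * f (p i) := by
  set S := ∑ i ∈ t, w i * φ ‖p i - ∑ j ∈ t, w j • p j‖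
  have hlim : Tendsto (fun τ : ℝ => (1 - τ) * S) (𝓝[>] 0) (𝓝 S) := by
    have : Continuous fun τ : ℝ => (1 - τ) * S := by fun_prop
    simpa using (this.tendsto 0).mono_left nhdsWithin_le_nhds
  have hS := le_of_tendsto hlim (eventually_of_mem (Ioo_mem_nhdsGT one_pos) fun τ hτ =>
    hf.one_sub_mul_sum_le hφ hw₀ hw₁ hp hτ)
  linarith

end UniformConvex

lemma norm_le_sum_erase_norm_of_sum_eq_zero {ι G : Type*} [DecidableEq ι]
    [SeminormedAddCommGroup G] {s : Finset ι} {u : ι → G} (hu : ∑ i ∈ s, u i = 0) {k : ι}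
    (hk : k ∈ s) : ‖u k‖ ≤ ∑ i ∈ s.erase k, ‖u i‖ := by
  have hk' : u k = -∑ i ∈ s.erase k, u i :=
    eq_neg_of_add_eq_zero_left (by rw [add_sum_erase s u hk, hu])
  rw [hk', norm_neg]
  exact norm_sum_le _ _

section Submultiplicative

variable {Φ : ℝ → ℝ} (hΦ0 : Φ 0 = 0) (hΦnonneg : ∀ x ∈ Set.Ici (0 : ℝ), 0 ≤ Φ x)
  (hΦconv : ConvexOn ℝ (Set.Ici 0) Φ) (hΦsub : ∀ A B : ℝ, 0 < A → 0 < B → Φ (A * B) ≤ Φ A * Φ B)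
include hΦ0 hΦnonneg hΦconv hΦsub

lemma card_mul_map_sum_le_of_submultiplicative {ι : Type*} {t : Finset ι} {v : ι → ℝ}
    (hv : ∀ i ∈ t, 0 ≤ v i) : (#t : ℝ) * Φ (∑ i ∈ t, v i) ≤ Φ #t * ∑ i ∈ t, Φ (v i) := by
  rcases (sum_nonneg hv).eq_or_lt with hzero | hpos
  · rw [← hzero, hΦ0, mul_zero]
    exact mul_nonneg (hΦnonneg _ (Set.mem_Ici.mpr (Nat.cast_nonneg _)))
      (sum_nonneg fun i hi => hΦnonneg _ (hv i hi))
  have hm : (0 : ℝ) < #t := by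
    exact_mod_cast card_pos.mpr (nonempty_of_sum_ne_zero hpos.ne')
  have hjensen : Φ ((#t : ℝ)⁻¹ * ∑ i ∈ t, v i) ≤ (#t : ℝ)⁻¹ * ∑ i ∈ t, Φ (v i) := by
    simpa only [smul_eq_mul, ← mul_sum] using hΦconv.map_sum_le (t := t)
      (fun _ _ => inv_nonneg.mpr hm.le) (by simp [hm.ne']) hv
  calc #t * Φ (∑ i ∈ t, v i) = #t * Φ (#t * ((#t : ℝ)⁻¹ * ∑ i ∈ t, v i)) := by
        rw [mul_inv_cancel_left₀ hm.ne']
    _ ≤ #t * (Φ #t * ((#t : ℝ)⁻¹ * ∑ i ∈ t, Φ (v i))) := by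
        gcongr
        exact (hΦsub _ _ hm (by positivity)).trans
          (mul_le_mul_of_nonneg_left hjensen (hΦnonneg _ hm.le))
    _ = Φ #t * ∑ i ∈ t, Φ (v i) := by field_simp

lemma map_abs_le_mul_average_of_sum_eq_zero (hΦmono : MonotoneOn Φ (Set.Ici 0)) {ι : Type*}
    [DecidableEq ι] {s : Finset ι} (hs : 2 ≤ #s) {u : ι → ℝ} (hu : ∑ i ∈ s, u i = 0) {k : ι}
    (hk : k ∈ s) :
    Φ |u k| ≤ ((#s : ℝ) * Φ ((#s : ℝ) - 1) / ((#s : ℝ) - 1 + Φ ((#s : ℝ) - 1))) *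
      ((1 / (#s : ℝ)) * ∑ i ∈ s, Φ |u i|) := by
  have hn : (2 : ℝ) ≤ #s := by exact_mod_cast hs
  set n : ℝ := ((#s : ℕ) : ℝ)
  set P := Φ (n - 1)
  have hP : 0 ≤ P := hΦnonneg _ (by simp only [Set.mem_Ici]; linarith)
  have hcard : (#(s.erase k) : ℝ) = n - 1 := by
    rw [card_erase_of_mem hk, Nat.cast_sub (by omega), Nat.cast_one]
  have hdeviation : (n - 1) * Φ |u k| ≤ P * ∑ i ∈ s.erase k, Φ |u i| :=
    calc (n - 1) * Φ |u k| ≤ (n - 1) * Φ (∑ i ∈ s.erase k, |u i|) := by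
          gcongr
          · linarith
          · exact hΦmono (Set.mem_Ici.mpr (abs_nonneg _))
              (Set.mem_Ici.mpr (sum_nonneg fun _ _ => abs_nonneg _))
              (norm_le_sum_erase_norm_of_sum_eq_zero hu hk)
      _ ≤ P * ∑ i ∈ s.erase k, Φ |u i| := by
          simpa only [hcard] using card_mul_map_sum_le_of_submultiplicative hΦ0 hΦnonneg hΦconv
            hΦsub (t := s.erase k) fun _ _ => abs_nonneg _
  rw [← add_sum_erase s _ hk, show ∀ q : ℝ, n * P / (n - 1 + P) * (1 / n * q) = P * q / (n - 1 + P)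
    by intro q; field_simp, le_div_iff₀ (by linarith)]
  linarith

end Submultiplicative

theorem stmt_4_general (a b : ℝ) (Φ : ℝ → ℝ)
    (hΦ0 : Φ 0 = 0)
    (hΦnonneg : ∀ x ∈ Set.Ici (0:ℝ), 0 ≤ Φ x)
    (hΦconv : ConvexOn ℝ (Set.Ici 0) Φ)
    (hΦmono : StrictMonoOn Φ (Set.Ici 0))
    (hΦsub : ∀ A B : ℝ, 0 < A → 0 < B → Φ (A * B) ≤ Φ A * Φ B)
    (f : ℝ → ℝ)
    (hf : ∀ x ∈ Set.Ico a b, ∀ y ∈ Set.Ico a b, ∀ t ∈ Set.Icc (0:ℝ) 1,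
      f (t * x + (1 - t) * y) + t * (1 - t) * Φ (|x - y|)
        ≤ t * f x + (1 - t) * f y)
    (n : ℕ) (hn : 2 ≤ n) (x : ℕ → ℝ)
    (hx : ∀ i ∈ Finset.Icc 1 n, x i ∈ Set.Ico a b)
    (xbar d : ℝ)
    (hxbar : xbar = (1 / n) * ∑ i ∈ Finset.Icc 1 n, x i)
    (hd : d = (1 / n) * ∑ i ∈ Finset.Icc 1 n, f (x i)) :
    (∀ k ∈ Finset.Icc 1 n,
      Φ (|x k - xbar|) ≤ (n * Φ ((n:ℝ) - 1) / ((n:ℝ) - 1 + Φ ((n:ℝ) - 1))) *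
        ((1 / n) * ∑ i ∈ Finset.Icc 1 n, Φ (|x i - xbar|))) ∧
    (n * Φ ((n:ℝ) - 1) / ((n:ℝ) - 1 + Φ ((n:ℝ) - 1))) *
        ((1 / n) * ∑ i ∈ Finset.Icc 1 n, Φ (|x i - xbar|))
      ≤ (n * Φ ((n:ℝ) - 1) / ((n:ℝ) - 1 + Φ ((n:ℝ) - 1))) * (d - f xbar) := by
  have hcard : #(Icc 1 n) = n := by simp
  have hn₂ : (2 : ℝ) ≤ n := by exact_mod_cast hn
  have hn₀ : (0 : ℝ) < n := by positivity
  refine ⟨fun k hk => ?_, ?_⟩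
  · have hdev : ∑ i ∈ Icc 1 n, (x i - xbar) = 0 := by
      rw [sum_sub_distrib, sum_const, hcard, nsmul_eq_mul, hxbar]
      field_simp
      ring
    simpa only [hcard] using map_abs_le_mul_average_of_sum_eq_zero hΦ0 hΦnonneg hΦconv hΦsub
      hΦmono.monotoneOn (by rwa [hcard]) hdev hk
  · have hfu : UniformConvexOn (Set.Ico a b) Φ f := by
      refine ⟨convex_Ico a b, fun y hy z hz t t' ht ht' htt' => ?_⟩
      obtain rfl : t' = 1 - t := by linarith
      have := hf y hy z hz t ⟨ht, by linarith⟩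
      simp only [smul_eq_mul, Real.norm_eq_abs]
      linarith
    have hjensen := hfu.map_sum_add_sum_le hΦnonneg (t := Icc 1 n) (w := fun _ => 1 / (n : ℝ))
      (fun _ _ => by positivity) (by simp [hcard, hn₀.ne']) hx
    simp only [smul_eq_mul, ← mul_sum, ← hxbar, Real.norm_eq_abs, ← hd] at hjensen
    have hP : 0 ≤ Φ ((n : ℝ) - 1) := hΦnonneg _ (by simp only [Set.mem_Ici]; linarith)
    exact mul_le_mul_of_nonneg_left (by linarith) (div_nonneg (by positivity) (by linarith))

/-- Theorem 5 of the paper: deviation bound for `f` uniformly convex with a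
convex, submultiplicative modulus `Φ`. -/
theorem stmt_4 (a b : ℝ) (hab : a < b) (Φ : ℝ → ℝ)
    (hΦ0 : Φ 0 = 0)
    (hΦnonneg : ∀ x ∈ Set.Ici (0:ℝ), 0 ≤ Φ x)
    (hΦconv : ConvexOn ℝ (Set.Ici 0) Φ)
    (hΦmono : StrictMonoOn Φ (Set.Ici 0))
    (hΦcont : ContinuousOn Φ (Set.Ici 0))
    (hΦsub : ∀ A B : ℝ, 0 < A → 0 < B → Φ (A * B) ≤ Φ A * Φ B)
    (f : ℝ → ℝ)
    (hf : ∀ x ∈ Set.Ico a b, ∀ y ∈ Set.Ico a b, ∀ t ∈ Set.Icc (0:ℝ) 1,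
      f (t * x + (1 - t) * y) + t * (1 - t) * Φ (|x - y|)
        ≤ t * f x + (1 - t) * f y)
    (n : ℕ) (hn : 2 ≤ n) (x : ℕ → ℝ)
    (hx : ∀ i ∈ Finset.Icc 1 n, x i ∈ Set.Ico a b)
    (xbar d : ℝ)
    (hxbar : xbar = (1 / n) * ∑ i ∈ Finset.Icc 1 n, x i)
    (hd : d = (1 / n) * ∑ i ∈ Finset.Icc 1 n, f (x i)) :
    (∀ k ∈ Finset.Icc 1 n,
      Φ (|x k - xbar|) ≤ (n * Φ ((n:ℝ) - 1) / ((n:ℝ) - 1 + Φ ((n:ℝ) - 1))) *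
        ((1 / n) * ∑ i ∈ Finset.Icc 1 n, Φ (|x i - xbar|))) ∧
    (n * Φ ((n:ℝ) - 1) / ((n:ℝ) - 1 + Φ ((n:ℝ) - 1))) *
        ((1 / n) * ∑ i ∈ Finset.Icc 1 n, Φ (|x i - xbar|))
      ≤ (n * Φ ((n:ℝ) - 1) / ((n:ℝ) - 1 + Φ ((n:ℝ) - 1))) * (d - f xbar) :=
  stmt_4_general a b Φ hΦ0 hΦnonneg hΦconv hΦmono hΦsub f hf n hn x hx xbar d hxbar hd
end

section
/- Let Φ : [0,∞) → [0,∞) be convex, strictly increasing and continuous with Φ(0) = 0 and Φ(A·B) ≤ Φ(A)·Φ(B) for all A > 0, B > 0. Let n ≥ 2 be an integer and let y₁,…,yₙ be real numbers with Σ_{i=1}^n yᵢ = 0. Then Φ(|yₙ|) ≤ (Φ(n−1)/(n−1)) · Σ_{i=1}^{n−1} Φ(|yᵢ|). -/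
/-!
Write `T = ∑_{i<n} |yᵢ|` and `c = n - 1`. The zero sum gives `|yₙ| ≤ T`, so by monotonicity
`Φ(|yₙ|) ≤ Φ(T) = Φ(c · T/c) ≤ Φ(c) Φ(T/c)`, and Jensen's inequality bounds `Φ(T/c)`, the value of
`Φ` at the mean of the `|yᵢ|`, by the mean of the `Φ(|yᵢ|)`.
-/

open Finset

theorem abs_le_sum_erase_abs_of_sum_eq_zero {ι : Type*} [DecidableEq ι] {s : Finset ι}
    {a : ι} (ha : a ∈ s) {y : ι → ℝ} (hy : ∑ i ∈ s, y i = 0) :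
    |y a| ≤ ∑ i ∈ s.erase a, |y i| := by
  have : y a = -∑ i ∈ s.erase a, y i := by
    linarith [add_sum_erase s y ha]
  rw [this, abs_neg]
  exact abs_sum_le_sum_abs _ _

theorem Nat.Icc_erase_right_eq_Icc_sub_one {a b : ℕ} (hb : 1 ≤ b) :
    (Icc a b).erase b = Icc a (b - 1) := by
  rw [Icc_erase_right, Icc_sub_one_right_eq_Ico_of_not_isMin (by simp; omega)]

section Submultiplicative

variable {Φ : ℝ → ℝ}

theorem map_mul_le_of_submultiplicative (hΦ0 : Φ 0 = 0)
    (hΦsub : ∀ A B : ℝ, 0 < A → 0 < B → Φ (A * B) ≤ Φ A * Φ B)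
    {c x : ℝ} (hc : 0 < c) (hx : 0 ≤ x) : Φ (c * x) ≤ Φ c * Φ x := by
  rcases hx.eq_or_lt with rfl | hx
  · simp [hΦ0]
  · exact hΦsub c x hc hx

theorem ConvexOn.map_sum_le_div_card_mul_sum (hΦconv : ConvexOn ℝ (Set.Ici 0) Φ)
    (hΦ0 : Φ 0 = 0) (hΦnonneg : ∀ x ∈ Set.Ici (0:ℝ), 0 ≤ Φ x)
    (hΦsub : ∀ A B : ℝ, 0 < A → 0 < B → Φ (A * B) ≤ Φ A * Φ B)
    {ι : Type*} {s : Finset ι} (hs : s.Nonempty) {x : ι → ℝ} (hx : ∀ i ∈ s, 0 ≤ x i) :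
    Φ (∑ i ∈ s, x i) ≤ Φ #s / #s * ∑ i ∈ s, Φ (x i) := by
  have hcard : (0 : ℝ) < #s := by exact_mod_cast hs.card_pos
  have hjensen : Φ (∑ i ∈ s, (#s : ℝ)⁻¹ • x i) ≤ ∑ i ∈ s, (#s : ℝ)⁻¹ • Φ (x i) :=
    hΦconv.map_sum_le (fun _ _ => by positivity) (by simp [hcard.ne']) hx
  simp only [smul_eq_mul, ← mul_sum] at hjensen
  calc Φ (∑ i ∈ s, x i) = Φ (#s * ((#s : ℝ)⁻¹ * ∑ i ∈ s, x i)) := by field_simp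
    _ ≤ Φ #s * Φ ((#s : ℝ)⁻¹ * ∑ i ∈ s, x i) :=
      map_mul_le_of_submultiplicative hΦ0 hΦsub hcard
        (by have := sum_nonneg hx; positivity)
    _ ≤ Φ #s * ((#s : ℝ)⁻¹ * ∑ i ∈ s, Φ (x i)) :=
      mul_le_mul_of_nonneg_left hjensen (hΦnonneg _ hcard.le)
    _ = Φ #s / #s * ∑ i ∈ s, Φ (x i) := by ring

end Submultiplicative

theorem stmt_5_general (Φ : ℝ → ℝ)
    (hΦ0 : Φ 0 = 0)
    (hΦnonneg : ∀ x ∈ Set.Ici (0:ℝ), 0 ≤ Φ x)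
    (hΦconv : ConvexOn ℝ (Set.Ici 0) Φ)
    (hΦmono : StrictMonoOn Φ (Set.Ici 0))
    (hΦsub : ∀ A B : ℝ, 0 < A → 0 < B → Φ (A * B) ≤ Φ A * Φ B)
    (n : ℕ) (hn : 2 ≤ n) (y : ℕ → ℝ)
    (hzero : ∑ i ∈ Finset.Icc 1 n, y i = 0) :
    Φ (|y n|) ≤ (Φ ((n:ℝ) - 1) / ((n:ℝ) - 1)) *
      ∑ i ∈ Finset.Icc 1 (n - 1), Φ (|y i|) := by
  have hS : (Icc 1 n).erase n = Icc 1 (n - 1) := Nat.Icc_erase_right_eq_Icc_sub_one (by omega)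
  have hcard : ((#(Icc 1 (n - 1)) : ℕ) : ℝ) = n - 1 := by
    rw [Nat.card_Icc, Nat.add_sub_cancel, Nat.cast_sub (by omega), Nat.cast_one]
  have habs : |y n| ≤ ∑ i ∈ Icc 1 (n - 1), |y i| :=
    hS ▸ abs_le_sum_erase_abs_of_sum_eq_zero (mem_Icc.2 ⟨by omega, le_rfl⟩) hzero
  calc Φ |y n| ≤ Φ (∑ i ∈ Icc 1 (n - 1), |y i|) :=
        hΦmono.monotoneOn (Set.mem_Ici.2 (abs_nonneg _))
          (Set.mem_Ici.2 (sum_nonneg fun _ _ => abs_nonneg _)) habs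
    _ ≤ _ := hcard ▸ hΦconv.map_sum_le_div_card_mul_sum hΦ0 hΦnonneg hΦsub
        (nonempty_Icc.2 (by omega)) fun _ _ => abs_nonneg _

/-- Key lemma of Theorem 5: bound on `Φ(|yₙ|)` for a zero-sum sequence, for a
convex, submultiplicative modulus `Φ`. -/
theorem stmt_5 (Φ : ℝ → ℝ)
    (hΦ0 : Φ 0 = 0)
    (hΦnonneg : ∀ x ∈ Set.Ici (0:ℝ), 0 ≤ Φ x)
    (hΦconv : ConvexOn ℝ (Set.Ici 0) Φ)
    (hΦmono : StrictMonoOn Φ (Set.Ici 0))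
    (hΦcont : ContinuousOn Φ (Set.Ici 0))
    (hΦsub : ∀ A B : ℝ, 0 < A → 0 < B → Φ (A * B) ≤ Φ A * Φ B)
    (n : ℕ) (hn : 2 ≤ n) (y : ℕ → ℝ)
    (hzero : ∑ i ∈ Finset.Icc 1 n, y i = 0) :
    Φ (|y n|) ≤ (Φ ((n:ℝ) - 1) / ((n:ℝ) - 1)) *
      ∑ i ∈ Finset.Icc 1 (n - 1), Φ (|y i|) :=
  stmt_5_general Φ hΦ0 hΦnonneg hΦconv hΦmono hΦsub n hn y hzero
end

section
/- Let n ≥ 2 be an integer, let y₁,…,yₙ be real numbers, let t₁,…,tₙ > 0 with Σ_{i=1}^n tᵢ = 1 and Σ_{i=1}^n tᵢyᵢ = 0, and let r ≥ 1 be a real number. Let 1 ≤ k ≤ j ≤ n with S := Σ_{i=k}^{j} tᵢ < 1. Then |Σ_{i=k}^{j} tᵢyᵢ / S| ≤ ( Σ_{i=1}^n tᵢ|yᵢ|^{2r} / ( S + S^{2r}·(1−S)^{1−2r} ) )^{1/(2r)}. -/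
open Finset in
lemma jensen_block (I : Finset ℕ) (t y : ℕ → ℝ) (ht : ∀ i ∈ I, 0 ≤ t i)
    (p : ℝ) (hp : 1 ≤ p) {S : ℝ} (hS : ∑ i ∈ I, t i = S) (hSpos : 0 < S) :
    |∑ i ∈ I, t i * y i| ^ p ≤ S ^ (p - 1) * ∑ i ∈ I, t i * |y i| ^ p := by
  have hp0 : (0:ℝ) < p := lt_of_lt_of_le one_pos hp
  have h1 : |∑ i ∈ I, t i * y i| ≤ ∑ i ∈ I, t i * |y i| := by
    refine (Finset.abs_sum_le_sum_abs _ _).trans (le_of_eq ?_)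
    exact Finset.sum_congr rfl fun i hi => by rw [abs_mul, abs_of_nonneg (ht i hi)]
  have hB : (0:ℝ) ≤ ∑ i ∈ I, t i * |y i| :=
    Finset.sum_nonneg fun i hi => mul_nonneg (ht i hi) (abs_nonneg _)
  have h2 : |∑ i ∈ I, t i * y i| ^ p ≤ (∑ i ∈ I, t i * |y i|) ^ p :=
    Real.rpow_le_rpow (abs_nonneg _) h1 hp0.le
  refine h2.trans ?_
  have hw' : ∑ i ∈ I, t i / S = 1 := by
    rw [← Finset.sum_div, hS, div_self hSpos.ne']
  have hj := Real.rpow_arith_mean_le_arith_mean_rpow I (fun i => t i / S)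
    (fun i => |y i|) (fun i hi => div_nonneg (ht i hi) hSpos.le) hw'
    (fun i _ => abs_nonneg _) hp
  simp only [div_mul_eq_mul_div] at hj
  rw [← Finset.sum_div, ← Finset.sum_div, Real.div_rpow hB hSpos.le] at hj
  have := (div_le_div_iff₀ (Real.rpow_pos_of_pos hSpos p) hSpos).mp hj
  calc (∑ i ∈ I, t i * |y i|) ^ p
      = (∑ i ∈ I, t i * |y i|) ^ p * S / S := by
        field_simp
    _ ≤ (∑ i ∈ I, t i * |y i| ^ p) * S ^ p / S := by
        gcongr
    _ = S ^ (p - 1) * ∑ i ∈ I, t i * |y i| ^ p := by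
        rw [Real.rpow_sub hSpos, Real.rpow_one]
        ring

/-- Theorem 6 A) of the paper: block average bound for a zero-mean weighted
sequence. -/
theorem stmt_6 (n : ℕ) (hn : 2 ≤ n) (y t : ℕ → ℝ)
    (ht : ∀ i ∈ Finset.Icc 1 n, 0 < t i)
    (htsum : ∑ i ∈ Finset.Icc 1 n, t i = 1)
    (hzero : ∑ i ∈ Finset.Icc 1 n, t i * y i = 0)
    (r : ℝ) (hr : 1 ≤ r)
    (k j : ℕ) (hk : 1 ≤ k) (hkj : k ≤ j) (hjn : j ≤ n)
    (S : ℝ) (hS : S = ∑ i ∈ Finset.Icc k j, t i) (hS1 : S < 1) :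
    |(∑ i ∈ Finset.Icc k j, t i * y i) / S| ≤
      ((∑ i ∈ Finset.Icc 1 n, t i * |y i| ^ (2*r)) /
        (S + S ^ (2*r) * (1 - S) ^ (1 - 2*r))) ^ (1/(2*r)) := by
  set p : ℝ := 2 * r with hpdef
  have hp : 1 ≤ p := by nlinarith
  have hp0 : (0:ℝ) < p := lt_of_lt_of_le one_pos hp
  set I : Finset ℕ := Finset.Icc k j with hI
  set U : Finset ℕ := Finset.Icc 1 n with hU
  have hIsub : I ⊆ U := Finset.Icc_subset_Icc hk hjn
  have hksub : k ∈ I := Finset.mem_Icc.mpr ⟨le_rfl, hkj⟩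
  have hSpos : 0 < S := by
    rw [hS]
    exact Finset.sum_pos' (fun i hi => (ht i (hIsub hi)).le) ⟨k, hksub, ht k (hIsub hksub)⟩
  have hS1' : 0 < 1 - S := by linarith
  set A : ℝ := ∑ i ∈ I, t i * y i with hA
  -- complement
  set I' : Finset ℕ := U \ I with hI'
  have hsum' : ∑ i ∈ I', t i = 1 - S := by
    rw [hI', Finset.sum_sdiff_eq_sub hIsub, htsum, hS]
  have hzero' : ∑ i ∈ I', t i * y i = -A := by
    rw [hI', Finset.sum_sdiff_eq_sub hIsub, hzero, hA]; ring
  have hb1 : |A| ^ p ≤ S ^ (p - 1) * ∑ i ∈ I, t i * |y i| ^ p :=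
    jensen_block I t y (fun i hi => (ht i (hIsub hi)).le) p hp hS.symm hSpos
  have hb2 : |A| ^ p ≤ (1 - S) ^ (p - 1) * ∑ i ∈ I', t i * |y i| ^ p := by
    have := jensen_block I' t y (fun i hi => (ht i (Finset.sdiff_subset hi)).le)
      p hp hsum' hS1'
    rwa [hzero', abs_neg] at this
  set M : ℝ := ∑ i ∈ U, t i * |y i| ^ p with hM
  have hMsplit : M = (∑ i ∈ I, t i * |y i| ^ p) + ∑ i ∈ I', t i * |y i| ^ p := by
    rw [hM, hI', Finset.sum_sdiff_eq_sub hIsub]; ring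
  have hMlb : |A| ^ p * (S ^ (1 - p) + (1 - S) ^ (1 - p)) ≤ M := by
    have e1 : S ^ (1 - p) * (S ^ (p - 1)) = 1 := by
      rw [← Real.rpow_add hSpos]; norm_num
    have e2 : (1 - S) ^ (1 - p) * ((1 - S) ^ (p - 1)) = 1 := by
      rw [← Real.rpow_add hS1']; norm_num
    have t1 : S ^ (1 - p) * |A| ^ p ≤ ∑ i ∈ I, t i * |y i| ^ p := by
      have := mul_le_mul_of_nonneg_left hb1 (Real.rpow_nonneg hSpos.le (1 - p))
      rwa [← mul_assoc, e1, one_mul] at this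
    have t2 : (1 - S) ^ (1 - p) * |A| ^ p ≤ ∑ i ∈ I', t i * |y i| ^ p := by
      have := mul_le_mul_of_nonneg_left hb2 (Real.rpow_nonneg hS1'.le (1 - p))
      rwa [← mul_assoc, e2, one_mul] at this
    rw [hMsplit]; nlinarith
  -- denominator
  have hD : S + S ^ p * (1 - S) ^ (1 - p) = S ^ p * (S ^ (1 - p) + (1 - S) ^ (1 - p)) := by
    rw [mul_add, ← Real.rpow_add hSpos]
    norm_num
  have hDpos : 0 < S + S ^ p * (1 - S) ^ (1 - p) := by
    have := Real.rpow_pos_of_pos hSpos p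
    have := Real.rpow_pos_of_pos hS1' (1 - p)
    positivity
  have hMnn : 0 ≤ M :=
    Finset.sum_nonneg fun i hi => mul_nonneg (ht i hi).le (Real.rpow_nonneg (abs_nonneg _) _)
  rw [one_div]
  rw [Real.le_rpow_inv_iff_of_pos (abs_nonneg _) (div_nonneg hMnn hDpos.le) hp0]
  rw [abs_div, abs_of_pos hSpos, Real.div_rpow (abs_nonneg _) hSpos.le]
  rw [div_le_div_iff₀ (Real.rpow_pos_of_pos hSpos p) hDpos, hD, ← mul_assoc]
  calc |A| ^ p * S ^ p * (S ^ (1 - p) + (1 - S) ^ (1 - p))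
      = (|A| ^ p * (S ^ (1 - p) + (1 - S) ^ (1 - p))) * S ^ p := by ring
    _ ≤ M * S ^ p := by
        gcongr
end

section
/- Let n ≥ 2 be an integer, let x₁,…,xₙ be real numbers, let t₁,…,tₙ > 0 with Σ_{i=1}^n tᵢ = 1, and set x̄ = Σ_{i=1}^n tᵢxᵢ. Let r ≥ 1 be a real number and let 1 ≤ k ≤ j ≤ n with S := Σ_{i=k}^{j} tᵢ < 1, and define x_{k,j} = Σ_{i=k}^{j} tᵢxᵢ / S. Then |x_{k,j} − x̄| ≤ ( Σ_{i=1}^n tᵢ|xᵢ − x̄|^{2r} / ( S + S^{2r}·(1−S)^{1−2r} ) )^{1/(2r)}. -/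
lemma jensen_abs {ι : Type*} (s : Finset ι) (w y : ι → ℝ) (hw : ∀ i ∈ s, 0 ≤ w i)
    (hw1 : ∑ i ∈ s, w i = 1) {p : ℝ} (hp : 1 ≤ p) :
    |∑ i ∈ s, w i * y i| ^ p ≤ ∑ i ∈ s, w i * |y i| ^ p := by
  have h1 : |∑ i ∈ s, w i * y i| ≤ ∑ i ∈ s, w i * |y i| := by
    calc |∑ i ∈ s, w i * y i| ≤ ∑ i ∈ s, |w i * y i| := Finset.abs_sum_le_sum_abs _ _
      _ = ∑ i ∈ s, w i * |y i| := Finset.sum_congr rfl fun i hi => by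
            rw [abs_mul, abs_of_nonneg (hw i hi)]
  calc |∑ i ∈ s, w i * y i| ^ p ≤ (∑ i ∈ s, w i * |y i|) ^ p :=
        Real.rpow_le_rpow (abs_nonneg _) h1 (by linarith)
    _ ≤ ∑ i ∈ s, w i * |y i| ^ p :=
        Real.rpow_arith_mean_le_arith_mean_rpow s w _ hw hw1 (fun i _ => abs_nonneg _) hp

/-- Theorem 6 B) of the paper: block weighted average deviation from the
weighted mean. -/
theorem stmt_7 (n : ℕ) (hn : 2 ≤ n) (x t : ℕ → ℝ)
    (ht : ∀ i ∈ Finset.Icc 1 n, 0 < t i)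
    (htsum : ∑ i ∈ Finset.Icc 1 n, t i = 1)
    (xbar : ℝ) (hxbar : xbar = ∑ i ∈ Finset.Icc 1 n, t i * x i)
    (r : ℝ) (hr : 1 ≤ r)
    (k j : ℕ) (hk : 1 ≤ k) (hkj : k ≤ j) (hjn : j ≤ n)
    (S : ℝ) (hS : S = ∑ i ∈ Finset.Icc k j, t i) (hS1 : S < 1) :
    |(∑ i ∈ Finset.Icc k j, t i * x i) / S - xbar| ≤
      ((∑ i ∈ Finset.Icc 1 n, t i * |x i - xbar| ^ (2*r)) /
        (S + S ^ (2*r) * (1 - S) ^ (1 - 2*r))) ^ (1/(2*r)) := by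
  set A := Finset.Icc k j with hA
  set N := Finset.Icc 1 n with hN
  have hsub : A ⊆ N := Finset.Icc_subset_Icc hk hjn
  have hAne : A.Nonempty := Finset.nonempty_Icc.2 hkj
  have hS0 : 0 < S := by
    rw [hS]; exact Finset.sum_pos (fun i hi => ht i (hsub hi)) hAne
  have h1S : 0 < 1 - S := by linarith
  set B := N \ A with hB
  have hBsum : ∑ i ∈ B, t i = 1 - S := by
    rw [hB, Finset.sum_sdiff_eq_sub hsub, htsum, hS]
  set d := (∑ i ∈ A, t i * x i) / S - xbar with hd
  have hp : (1:ℝ) ≤ 2 * r := by linarith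
  have hp0 : (0:ℝ) < 2 * r := by linarith
  -- block mean
  have hAd : ∑ i ∈ A, (t i / S) * (x i - xbar) = d := by
    have h1 : ∑ i ∈ A, (t i / S) * (x i - xbar)
        = (∑ i ∈ A, t i * x i) * S⁻¹ - (∑ i ∈ A, t i) * (S⁻¹ * xbar) := by
      rw [Finset.sum_mul, Finset.sum_mul, ← Finset.sum_sub_distrib]
      exact Finset.sum_congr rfl fun i _ => by field_simp
    rw [h1, ← hS, hd]; field_simp
  have htot : ∑ i ∈ N, t i * (x i - xbar) = 0 := by
    have : ∑ i ∈ N, t i * (x i - xbar)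
        = (∑ i ∈ N, t i * x i) - (∑ i ∈ N, t i) * xbar := by
      rw [Finset.sum_mul, ← Finset.sum_sub_distrib]
      congr 1; ext i; ring
    rw [this, htsum, ← hxbar]; ring
  have hBd : ∑ i ∈ B, (t i / (1 - S)) * (x i - xbar) = -(S * d) / (1 - S) := by
    have hsplit : ∑ i ∈ B, t i * (x i - xbar)
        = ∑ i ∈ N, t i * (x i - xbar) - ∑ i ∈ A, t i * (x i - xbar) :=
      Finset.sum_sdiff_eq_sub hsub
    have hAval : ∑ i ∈ A, t i * (x i - xbar) = S * d := by
      have := hAd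
      rw [← this, Finset.mul_sum]
      congr 1; ext i
      field_simp
    have : ∑ i ∈ B, t i * (x i - xbar) = -(S * d) := by
      rw [hsplit, htot, hAval]; ring
    rw [eq_div_iff h1S.ne', ← this, Finset.sum_mul]
    congr 1; ext i; field_simp
  -- Jensen on the block
  have hJ1 : |d| ^ (2*r) ≤ ∑ i ∈ A, (t i / S) * |x i - xbar| ^ (2*r) := by
    have := jensen_abs A (fun i => t i / S) (fun i => x i - xbar)
      (fun i hi => div_nonneg (ht i (hsub hi)).le hS0.le)
      (by rw [← Finset.sum_div, ← hS, div_self hS0.ne']) hp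
    rwa [hAd] at this
  have hJ2 : |(-(S * d) / (1 - S))| ^ (2*r)
      ≤ ∑ i ∈ B, (t i / (1 - S)) * |x i - xbar| ^ (2*r) := by
    have := jensen_abs B (fun i => t i / (1 - S)) (fun i => x i - xbar)
      (fun i hi => div_nonneg (ht i (Finset.sdiff_subset hi)).le h1S.le)
      (by rw [← Finset.sum_div, hBsum, div_self h1S.ne']) hp
    rwa [hBd] at this
  -- multiply through
  have hA1 : S * |d| ^ (2*r) ≤ ∑ i ∈ A, t i * |x i - xbar| ^ (2*r) := by
    have h := mul_le_mul_of_nonneg_left hJ1 hS0.le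
    calc S * |d| ^ (2*r) ≤ S * ∑ i ∈ A, (t i / S) * |x i - xbar| ^ (2*r) := h
      _ = ∑ i ∈ A, t i * |x i - xbar| ^ (2*r) := by
          rw [Finset.mul_sum]; congr 1; ext i; field_simp
  have habs : |(-(S * d) / (1 - S))| = S * |d| / (1 - S) := by
    rw [abs_div, abs_neg, abs_mul, abs_of_pos hS0, abs_of_pos h1S]
  have hpow2 : |(-(S * d) / (1 - S))| ^ (2*r)
      = S ^ (2*r) * |d| ^ (2*r) * ((1 - S) ^ (2*r))⁻¹ := by
    rw [habs, Real.div_rpow (by positivity) h1S.le,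
      Real.mul_rpow hS0.le (abs_nonneg _), div_eq_mul_inv]
  have hB1 : S ^ (2*r) * (1 - S) ^ (1 - 2*r) * |d| ^ (2*r)
      ≤ ∑ i ∈ B, t i * |x i - xbar| ^ (2*r) := by
    have h := mul_le_mul_of_nonneg_left hJ2 h1S.le
    have hrw : (1 - S) * |(-(S * d) / (1 - S))| ^ (2*r)
        = S ^ (2*r) * (1 - S) ^ (1 - 2*r) * |d| ^ (2*r) := by
      rw [hpow2]
      have : (1 - S) ^ (1 - 2*r) = (1 - S) * ((1 - S) ^ (2*r))⁻¹ := by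
        rw [← Real.rpow_neg h1S.le, show (1:ℝ) - 2*r = 1 + -(2*r) by ring,
          Real.rpow_add h1S, Real.rpow_one]
      rw [this]; ring
    calc S ^ (2*r) * (1 - S) ^ (1 - 2*r) * |d| ^ (2*r)
        = (1 - S) * |(-(S * d) / (1 - S))| ^ (2*r) := hrw.symm
      _ ≤ (1 - S) * ∑ i ∈ B, (t i / (1 - S)) * |x i - xbar| ^ (2*r) := h
      _ = ∑ i ∈ B, t i * |x i - xbar| ^ (2*r) := by
          rw [Finset.mul_sum]; congr 1; ext i; field_simp
  set D := S + S ^ (2*r) * (1 - S) ^ (1 - 2*r) with hD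
  have hD0 : 0 < D := by
    have : 0 < S ^ (2*r) * (1 - S) ^ (1 - 2*r) := by positivity
    dsimp [D]; linarith
  set T := ∑ i ∈ N, t i * |x i - xbar| ^ (2*r) with hT
  have hkey : D * |d| ^ (2*r) ≤ T := by
    have hsplit : T = (∑ i ∈ A, t i * |x i - xbar| ^ (2*r))
        + ∑ i ∈ B, t i * |x i - xbar| ^ (2*r) := by
      rw [hT, hB, Finset.sum_sdiff_eq_sub hsub]; ring
    rw [hsplit, hD]; nlinarith [hA1, hB1]
  have hdle : |d| ^ (2*r) ≤ T / D := (le_div_iff₀ hD0).2 (by linarith [hkey])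
  calc |d| = (|d| ^ (2*r)) ^ (1/(2*r)) := by
        rw [← Real.rpow_mul (abs_nonneg d), mul_one_div, div_self hp0.ne', Real.rpow_one]
    _ ≤ (T / D) ^ (1/(2*r)) :=
        Real.rpow_le_rpow (by positivity) hdle (by positivity)
end

section
/- Let n ≥ 2 be an integer and let x₁ ≥ x₂ ≥ … ≥ xₙ be real numbers. Set x̄ = (1/n)·Σ_{i=1}^n xᵢ and, for 1 ≤ j ≤ n, x_{1,j} = (1/j)·Σ_{i=1}^{j} xᵢ. Then the sequence j ↦ x_{1,j} is nonincreasing in j, and for every real r ≥ 1 and every 1 ≤ j ≤ n−1, x_{1,j} ≤ x̄ + ( (1/n)·Σ_{i=1}^n |xᵢ − x̄|^{2r} / ( j/n + (j/n)^{2r}·(1 − j/n)^{1−2r} ) )^{1/(2r)}. -/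
/-!
Let `c` be the excess of the average of a block `s` of `k` of the `n` entries over the mean.
The deviations `x i - xbar` sum to `k c` on `s` and to `-k c` on the rest, so the power-mean
inequality on each block gives `∑ |x i - xbar| ^ p ≥ k c ^ p + (n - k) (k c / (n - k)) ^ p`,
which is `n c ^ p (t + t ^ p (1 - t) ^ (1 - p))` with `t = k / n`.
-/

open Finset Real

variable {ι : Type*}

lemma sum_add_div_card_add_one_le (s : Finset ι) (hs : s.Nonempty) (x : ι → ℝ) {c : ℝ}
    (hc : ∀ i ∈ s, c ≤ x i) :
    1 / (s.card + 1 : ℝ) * (∑ i ∈ s, x i + c) ≤ 1 / s.card * ∑ i ∈ s, x i := by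
  have hk : (0 : ℝ) < s.card := by exact_mod_cast hs.card_pos
  have hsum : s.card * c ≤ ∑ i ∈ s, x i := by
    simpa using card_nsmul_le_sum s x c hc
  rw [one_div_mul_eq_div, one_div_mul_eq_div, div_le_div_iff₀ (by positivity) hk]
  nlinarith

lemma card_mul_abs_sum_div_card_rpow_le (s : Finset ι) (y : ι → ℝ) {p : ℝ} (hp : 1 ≤ p) :
    s.card * (|∑ i ∈ s, y i| / s.card) ^ p ≤ ∑ i ∈ s, |y i| ^ p := by
  rcases s.eq_empty_or_nonempty with rfl | hs
  · simp
  have hk : (0 : ℝ) < s.card := by exact_mod_cast hs.card_pos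
  have hw : ∑ _i ∈ s, 1 / (s.card : ℝ) = 1 := by simp [hk.ne']
  have hmean : |∑ i ∈ s, y i| / s.card ≤ ∑ i ∈ s, 1 / (s.card : ℝ) * |y i| := by
    rw [← mul_sum, one_div_mul_eq_div]
    gcongr
    exact abs_sum_le_sum_abs _ _
  have hjensen := rpow_arith_mean_le_arith_mean_rpow s (fun _ ↦ 1 / (s.card : ℝ)) (|y ·|)
    (fun _ _ ↦ by positivity) hw (fun _ _ ↦ abs_nonneg _) hp
  calc s.card * (|∑ i ∈ s, y i| / s.card) ^ p
      ≤ s.card * ∑ i ∈ s, 1 / (s.card : ℝ) * |y i| ^ p := by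
        gcongr
        exact (rpow_le_rpow (by positivity) hmean (by linarith)).trans hjensen
    _ = ∑ i ∈ s, |y i| ^ p := by rw [← mul_sum]; field_simp

noncomputable def deviationWeight (t p : ℝ) : ℝ := t + t ^ p * (1 - t) ^ (1 - p)

lemma deviationWeight_pos {t : ℝ} (ht₀ : 0 < t) (ht₁ : t < 1) (p : ℝ) :
    0 < deviationWeight t p := by
  have : 0 < 1 - t := sub_pos.2 ht₁
  unfold deviationWeight
  positivity

lemma rpow_mul_deviationWeight_div_eq {k m c p : ℝ} (hk : 0 ≤ k) (hkm : k < m) (hc : 0 ≤ c) :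
    c ^ p * deviationWeight (k / m) p =
      1 / m * (k * c ^ p + (m - k) * (k * c / (m - k)) ^ p) := by
  have hm : 0 < m := hk.trans_lt hkm
  have hmk : 0 < m - k := sub_pos.2 hkm
  rw [deviationWeight, one_sub_div hm.ne', div_rpow hk hm.le, div_rpow hmk.le hm.le,
    div_rpow (by positivity) hmk.le, mul_rpow hk hc, rpow_sub hmk, rpow_sub hm, rpow_one,
    rpow_one]
  have hmp := rpow_pos_of_pos hm p
  have hmkp := rpow_pos_of_pos hmk p
  field_simp

theorem sum_div_card_le_mean_add_rpow (u s : Finset ι) (hsu : s ⊂ u) (hs : s.Nonempty)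
    (x : ι → ℝ) (xbar : ℝ) (hxbar : xbar = 1 / u.card * ∑ i ∈ u, x i) {p : ℝ}
    (hp : 1 ≤ p) :
    1 / (s.card : ℝ) * ∑ i ∈ s, x i ≤
      xbar + ((1 / u.card * ∑ i ∈ u, |x i - xbar| ^ p) /
        deviationWeight (s.card / u.card) p) ^ (1 / p) := by
  classical
  have hk : (0 : ℝ) < s.card := by exact_mod_cast hs.card_pos
  have hkm : (s.card : ℝ) < u.card := by exact_mod_cast card_lt_card hsu
  have hD := deviationWeight_pos (div_pos hk (hk.trans hkm))
    ((div_lt_one (hk.trans hkm)).2 hkm) p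
  set c := 1 / (s.card : ℝ) * ∑ i ∈ s, x i - xbar with hc
  rcases le_or_gt c 0 with hc0 | hc0
  · have hA : 0 ≤ 1 / u.card * ∑ i ∈ u, |x i - xbar| ^ p := by positivity
    linarith [rpow_nonneg (div_nonneg hA hD.le) (1 / p)]
  have hsum_s : ∑ i ∈ s, (x i - xbar) = s.card * c := by
    rw [sum_sub_distrib, sum_const, nsmul_eq_mul, hc]
    field_simp
  have hsum_rest : ∑ i ∈ u \ s, (x i - xbar) = -(s.card * c) := by
    have hsum_u : ∑ i ∈ u, (x i - xbar) = 0 := by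
      rw [sum_sub_distrib, sum_const, nsmul_eq_mul, hxbar]
      field_simp [(hk.trans hkm).ne']
      ring
    linarith [sum_sdiff hsu.subset (f := fun i ↦ x i - xbar)]
  have hcard_rest : ((u \ s).card : ℝ) = u.card - s.card := by
    rw [card_sdiff_of_subset hsu.subset, Nat.cast_sub (card_le_card hsu.subset)]
  have hblocks : s.card * c ^ p + (u.card - s.card) * (s.card * c / (u.card - s.card)) ^ p ≤
      ∑ i ∈ u, |x i - xbar| ^ p := by
    have h_s := card_mul_abs_sum_div_card_rpow_le s (x · - xbar) hp
    have h_rest := card_mul_abs_sum_div_card_rpow_le (u \ s) (x · - xbar) hp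
    rw [hsum_s, abs_of_pos (by positivity), mul_div_cancel_left₀ _ hk.ne'] at h_s
    rw [hsum_rest, abs_neg, abs_of_pos (by positivity), hcard_rest] at h_rest
    rw [← sum_sdiff hsu.subset]
    linarith
  have hcD : c ^ p * deviationWeight (s.card / u.card) p ≤
      1 / u.card * ∑ i ∈ u, |x i - xbar| ^ p := by
    rw [rpow_mul_deviationWeight_div_eq hk.le hkm hc0.le]
    exact mul_le_mul_of_nonneg_left hblocks (by positivity)
  have hc_le : c ≤ _ := (le_rpow_inv_iff_of_pos hc0.le (by positivity) (by linarith)).2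
    ((le_div_iff₀ hD).2 hcD)
  rw [one_div p]
  linarith

theorem stmt_8_general (n : ℕ) (x : ℕ → ℝ)
    (hmono : ∀ i, 1 ≤ i → i ≤ n - 1 → x (i + 1) ≤ x i)
    (xbar : ℝ) (hxbar : xbar = (1 / n) * ∑ i ∈ Finset.Icc 1 n, x i) :
    (∀ j, 1 ≤ j → j ≤ n - 1 →
      (1 / (j + 1 : ℝ)) * ∑ i ∈ Finset.Icc 1 (j + 1), x i ≤
        (1 / (j : ℝ)) * ∑ i ∈ Finset.Icc 1 j, x i) ∧
    (∀ r : ℝ, 1 ≤ r → ∀ j, 1 ≤ j → j ≤ n - 1 →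
      (1 / (j : ℝ)) * ∑ i ∈ Finset.Icc 1 j, x i ≤
        xbar + (((1 / n) * ∑ i ∈ Finset.Icc 1 n, |x i - xbar| ^ (2*r)) /
          ((j / n : ℝ) + ((j / n : ℝ)) ^ (2*r) * (1 - (j / n : ℝ)) ^ (1 - 2*r)))
            ^ (1/(2*r))) := by
  have hanti : AntitoneOn x (Set.Icc 1 n) :=
    antitoneOn_of_succ_le Set.ordConnected_Icc fun a _ ha hsa ↦ by
      simp only [Order.succ_eq_add_one, Set.mem_Icc] at ha hsa
      exact hmono a ha.1 (by omega)
  refine ⟨fun j hj hjn ↦ ?_, fun r hr j hj hjn ↦ ?_⟩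
  · have hle : ∀ i ∈ Icc 1 j, x (j + 1) ≤ x i := fun i hi ↦ by
      rw [mem_Icc] at hi
      exact hanti ⟨hi.1, by omega⟩ ⟨by omega, by omega⟩ (by omega)
    have havg := sum_add_div_card_add_one_le (Icc 1 j) (nonempty_Icc.2 hj) x hle
    rwa [Nat.card_Icc, Nat.add_sub_cancel, ← sum_Icc_succ_top (by omega)] at havg
  · have hbound := sum_div_card_le_mean_add_rpow (Icc 1 n) (Icc 1 j)
      (Icc_ssubset_Icc_right (by omega) le_rfl (by omega)) (nonempty_Icc.2 hj) x xbar
      (by rwa [Nat.card_Icc, Nat.add_sub_cancel]) (by linarith : 1 ≤ 2 * r)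
    rw [Nat.card_Icc, Nat.card_Icc, Nat.add_sub_cancel, Nat.add_sub_cancel] at hbound
    exact hbound

/-- Theorem 6 C) of the paper: for a nonincreasing sequence, the partial
averages `x_{1,j}` are nonincreasing in `j`, and are bounded above by the mean
plus a deviation term. -/
theorem stmt_8 (n : ℕ) (hn : 2 ≤ n) (x : ℕ → ℝ)
    (hmono : ∀ i, 1 ≤ i → i ≤ n - 1 → x (i + 1) ≤ x i)
    (xbar : ℝ) (hxbar : xbar = (1 / n) * ∑ i ∈ Finset.Icc 1 n, x i) :
    (∀ j, 1 ≤ j → j ≤ n - 1 →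
      (1 / (j + 1 : ℝ)) * ∑ i ∈ Finset.Icc 1 (j + 1), x i ≤
        (1 / (j : ℝ)) * ∑ i ∈ Finset.Icc 1 j, x i) ∧
    (∀ r : ℝ, 1 ≤ r → ∀ j, 1 ≤ j → j ≤ n - 1 →
      (1 / (j : ℝ)) * ∑ i ∈ Finset.Icc 1 j, x i ≤
        xbar + (((1 / n) * ∑ i ∈ Finset.Icc 1 n, |x i - xbar| ^ (2*r)) /
          ((j / n : ℝ) + ((j / n : ℝ)) ^ (2*r) * (1 - (j / n : ℝ)) ^ (1 - 2*r)))
            ^ (1/(2*r))) :=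
  stmt_8_general n x hmono xbar hxbar
end

section
/- Let n ≥ 2 be an integer and fix 1 ≤ k ≤ n−1. Let y₁ ≤ y₂ ≤ … ≤ yₙ be real numbers and let t₁,…,tₙ be real numbers (not necessarily nonnegative) with Σ_{i=1}^n tᵢ = 1 and Σ_{i=1}^n tᵢyᵢ = 0, satisfying: 0 ≤ Σ_{i=1}^{j} tᵢ ≤ 1 for all 1 ≤ j ≤ n; Σ_{i=1}^{j} tᵢ ≤ Σ_{i=1}^{k} tᵢ for all j ≤ k; t_{k+1} > 0; 0 ≤ Σ_{i=k+1}^{l} tᵢ ≤ Σ_{i=k+1}^{n} tᵢ for all k+1 ≤ l ≤ n; and 0 < P_k < 1 where P_k := Σ_{i=1}^{k} tᵢ. Then for every real r ≥ 1, |Σ_{i=1}^{k} tᵢyᵢ / P_k| ≤ ( Σ_{i=1}^n tᵢ|yᵢ|^{2r} / ( P_k + P_k^{2r}·(1−P_k)^{1−2r} ) )^{1/(2r)}. -/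
/-!
Apply the Jensen–Steffensen inequality for the convex function `|x| ^ (2r)` to each of the blocks
`{1, …, k}` and `{k + 1, …, n}`, of masses `P` and `1 - P`. Since the block sums `A`, `B` of
`tᵢ yᵢ` satisfy `A + B = 0`, the two lower bounds add up to
`P |A/P|^(2r) + (1 - P) |A/(1 - P)|^(2r) = |A/P|^(2r) (P + P^(2r) (1 - P)^(1 - 2r))`.

For Jensen–Steffensen itself, subtract from `f` a supporting line at the weighted mean `x₀`: the
difference `g` decreases left of `x₀` and increases right of it, and
`g (yᵢ) = g (min yᵢ x₀) + g (max yᵢ x₀) - g x₀` splits `g ∘ y` into an antitone and a monotone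
sequence. For those, Abel summation needs only the signs of the partial sums of the weights.
-/

open Finset

theorem Finset.sum_Icc_add_sum_Ioc {M : Type*} [AddCommMonoid M] (f : ℕ → M) {a m b : ℕ}
    (ham : a ≤ m) (hmb : m ≤ b) :
    ∑ i ∈ Icc a m, f i + ∑ i ∈ Ioc m b, f i = ∑ i ∈ Icc a b, f i := by
  rw [← add_sum_Ioc_eq_sum_Icc ham, ← add_sum_Ioc_eq_sum_Icc (ham.trans hmb), add_assoc,
    sum_Ioc_consecutive f ham hmb]

section AbelBounds

variable {t u : ℕ → ℝ} {a b : ℕ}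

theorem sum_Icc_mul_le_of_antitoneOn (hab : a ≤ b)
    (hS : ∀ j ∈ Ico a b, 0 ≤ ∑ i ∈ Icc a j, t i) (hu : AntitoneOn u (Set.Icc a b)) :
    (∑ i ∈ Icc a b, t i) * u b ≤ ∑ i ∈ Icc a b, t i * u i := by
  induction b, hab using Nat.le_induction with
  | base => simp
  | succ b hab ih =>
    have hSb : 0 ≤ ∑ i ∈ Icc a b, t i := hS b (mem_Ico.2 ⟨hab, b.lt_succ_self⟩)
    have hub : u (b + 1) ≤ u b := hu ⟨hab, b.le_succ⟩ ⟨hab.trans b.le_succ, le_rfl⟩ b.le_succ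
    have ih := ih (fun j hj => hS j (Ico_subset_Ico_right b.le_succ hj))
      (hu.mono (Set.Icc_subset_Icc_right b.le_succ))
    rw [sum_Icc_succ_top (hab.trans b.le_succ), sum_Icc_succ_top (hab.trans b.le_succ)]
    nlinarith

theorem sum_Icc_mul_le_of_monotoneOn (hab : a ≤ b)
    (hT : ∀ j ∈ Ico a b, 0 ≤ ∑ i ∈ Ioc j b, t i) (hu : MonotoneOn u (Set.Icc a b)) :
    (∑ i ∈ Icc a b, t i) * u a ≤ ∑ i ∈ Icc a b, t i * u i := by
  induction hab using Nat.decreasingInduction with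
  | self => simp
  | of_succ a hab ih =>
    have hTa : 0 ≤ ∑ i ∈ Ioc a b, t i := hT a (mem_Ico.2 ⟨le_rfl, hab⟩)
    have hua : u a ≤ u (a + 1) := hu ⟨le_rfl, hab.le⟩ ⟨a.le_succ, hab⟩ a.le_succ
    have ih := ih (fun j hj => hT j (Ico_subset_Ico_left a.le_succ hj))
      (hu.mono (Set.Icc_subset_Icc_left a.le_succ))
    rw [Icc_add_one_left_eq_Ioc] at ih
    rw [← add_sum_Ioc_eq_sum_Icc hab.le, ← add_sum_Ioc_eq_sum_Icc hab.le]
    nlinarith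

theorem mul_apply_le_sum_Icc_mul_apply {g : ℝ → ℝ} {x₀ : ℝ} {y : ℕ → ℝ}
    (hg₁ : AntitoneOn g (Set.Iic x₀)) (hg₂ : MonotoneOn g (Set.Ici x₀))
    (hab : a ≤ b) (hy : MonotoneOn y (Set.Icc a b)) (hya : y a ≤ x₀) (hyb : x₀ ≤ y b)
    (hS : ∀ j ∈ Ico a b, 0 ≤ ∑ i ∈ Icc a j, t i) (hT : ∀ j ∈ Ico a b, 0 ≤ ∑ i ∈ Ioc j b, t i) :
    (∑ i ∈ Icc a b, t i) * g x₀ ≤ ∑ i ∈ Icc a b, t i * g (y i) := by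
  have hlow := sum_Icc_mul_le_of_antitoneOn (u := fun i => g (min (y i) x₀)) hab hS
    fun i hi j hj hij => hg₁ (Set.mem_Iic.2 (min_le_right _ _))
      (Set.mem_Iic.2 (min_le_right _ _)) (min_le_min_right _ (hy hi hj hij))
  have hhigh := sum_Icc_mul_le_of_monotoneOn (u := fun i => g (max (y i) x₀)) hab hT
    fun i hi j hj hij => hg₂ (Set.mem_Ici.2 (le_max_right _ _))
      (Set.mem_Ici.2 (le_max_right _ _)) (max_le_max_right _ (hy hi hj hij))
  have hsplit : ∀ x, g x + g x₀ = g (min x x₀) + g (max x x₀) := fun x => by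
    rcases le_total x x₀ with h | h <;> simp [h, add_comm]
  have hsum : ∑ i ∈ Icc a b, t i * g (y i) + (∑ i ∈ Icc a b, t i) * g x₀ =
      ∑ i ∈ Icc a b, t i * g (min (y i) x₀) + ∑ i ∈ Icc a b, t i * g (max (y i) x₀) := by
    rw [sum_mul, ← sum_add_distrib, ← sum_add_distrib]
    exact sum_congr rfl fun i _ => by rw [← mul_add, ← mul_add, hsplit]
  simp only [min_eq_right hyb, max_eq_right hya] at hlow hhigh
  linarith

end AbelBounds

section Convex

variable {f : ℝ → ℝ}

theorem ConvexOn.antitoneOn_sub_rightDeriv_mul (hf : ConvexOn ℝ Set.univ f) (x₀ : ℝ) :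
    AntitoneOn (fun x => f x - derivWithin f (Set.Ioi x₀) x₀ * x) (Set.Iic x₀) := by
  intro x _ z hz hxz
  rcases hxz.eq_or_lt with rfl | hxz
  · rfl
  have hslope : slope f x z ≤ derivWithin f (Set.Ioi x₀) x₀ :=
    calc slope f x z ≤ derivWithin f (Set.Iio z) z :=
          hf.slope_le_leftDeriv_of_mem_interior (by simp) (by simp) hxz
      _ ≤ derivWithin f (Set.Ioi z) z := hf.leftDeriv_le_rightDeriv_of_mem_interior (by simp)
      _ ≤ derivWithin f (Set.Ioi x₀) x₀ := hf.monotoneOn_rightDeriv (by simp) (by simp) hz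
  rw [slope_def_field, div_le_iff₀ (sub_pos.2 hxz)] at hslope
  dsimp only
  linarith

theorem ConvexOn.monotoneOn_sub_rightDeriv_mul (hf : ConvexOn ℝ Set.univ f) (x₀ : ℝ) :
    MonotoneOn (fun x => f x - derivWithin f (Set.Ioi x₀) x₀ * x) (Set.Ici x₀) := by
  intro x hx z _ hxz
  rcases hxz.eq_or_lt with rfl | hxz
  · rfl
  have hslope : derivWithin f (Set.Ioi x₀) x₀ ≤ slope f x z :=
    calc derivWithin f (Set.Ioi x₀) x₀ ≤ derivWithin f (Set.Ioi x) x :=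
          hf.monotoneOn_rightDeriv (by simp) (by simp) hx
      _ ≤ slope f x z := hf.rightDeriv_le_slope_of_mem_interior (by simp) (by simp) hxz
  rw [slope_def_field, le_div_iff₀ (sub_pos.2 hxz)] at hslope
  dsimp only
  linarith

theorem ConvexOn.jensen_steffensen {t y : ℕ → ℝ} {a b : ℕ} (hf : ConvexOn ℝ Set.univ f)
    (hy : MonotoneOn y (Set.Icc a b)) (hS₀ : ∀ j ∈ Ico a b, 0 ≤ ∑ i ∈ Icc a j, t i)
    (hS₁ : ∀ j ∈ Ico a b, ∑ i ∈ Icc a j, t i ≤ ∑ i ∈ Icc a b, t i)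
    (hT : 0 < ∑ i ∈ Icc a b, t i) :
    (∑ i ∈ Icc a b, t i) * f ((∑ i ∈ Icc a b, t i * y i) / ∑ i ∈ Icc a b, t i) ≤
      ∑ i ∈ Icc a b, t i * f (y i) := by
  have hab : a ≤ b := Finset.nonempty_Icc.1 (nonempty_of_sum_ne_zero hT.ne')
  have hT' : ∀ j ∈ Ico a b, 0 ≤ ∑ i ∈ Ioc j b, t i := fun j hj => by
    have := sum_Icc_add_sum_Ioc t (mem_Ico.1 hj).1 (mem_Ico.1 hj).2.le
    linarith [hS₁ j hj]
  set x₀ := (∑ i ∈ Icc a b, t i * y i) / ∑ i ∈ Icc a b, t i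
  have hmean : (∑ i ∈ Icc a b, t i) * x₀ = ∑ i ∈ Icc a b, t i * y i := mul_div_cancel₀ _ hT.ne'
  have hya : y a ≤ x₀ :=
    le_of_mul_le_mul_left (hmean ▸ sum_Icc_mul_le_of_monotoneOn hab hT' hy) hT
  have hyb : x₀ ≤ y b := by
    have := sum_Icc_mul_le_of_antitoneOn hab hS₀ hy.neg
    simp only [mul_neg, sum_neg_distrib, neg_le_neg_iff] at this
    exact le_of_mul_le_mul_left (hmean ▸ this) hT
  have key := mul_apply_le_sum_Icc_mul_apply (hf.antitoneOn_sub_rightDeriv_mul x₀)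
    (hf.monotoneOn_sub_rightDeriv_mul x₀) hab hy hya hyb hS₀ hT'
  set c := derivWithin f (Set.Ioi x₀) x₀
  have hlin : ∑ i ∈ Icc a b, t i * (c * y i) = c * ∑ i ∈ Icc a b, t i * y i := by
    rw [mul_sum]; exact sum_congr rfl fun i _ => mul_left_comm _ _ _
  simp only [mul_sub, sum_sub_distrib, hlin] at key
  linarith [congrArg (c * ·) hmean]

end Convex

theorem convexOn_abs_rpow {p : ℝ} (hp : 1 ≤ p) : ConvexOn ℝ Set.univ fun x : ℝ => |x| ^ p := by
  have hrange : (fun x : ℝ => |x|) '' Set.univ = Set.Ici 0 := by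
    ext x
    exact ⟨by rintro ⟨x, -, rfl⟩; exact abs_nonneg x, fun hx => ⟨x, trivial, abs_of_nonneg hx⟩⟩
  have habs : ConvexOn ℝ Set.univ fun x : ℝ => |x| := convexOn_univ_norm (E := ℝ)
  exact (hrange ▸ convexOn_rpow hp).comp habs
    (hrange ▸ Real.monotoneOn_rpow_Ici_of_exponent_nonneg (by linarith))

theorem mul_abs_div_rpow_add_mul_abs_neg_div_rpow (A : ℝ) {P : ℝ} (hP0 : 0 < P) (hP1 : P < 1)
    (q : ℝ) :
    P * |A / P| ^ q + (1 - P) * |-A / (1 - P)| ^ q =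
      |A / P| ^ q * (P + P ^ q * (1 - P) ^ (1 - q)) := by
  have hQ0 : 0 < 1 - P := sub_pos.2 hP1
  have hAQ : |-A / (1 - P)| = |A / P| * (P / (1 - P)) := by
    rw [abs_div, abs_div, abs_neg, abs_of_pos hP0, abs_of_pos hQ0]
    field_simp
  rw [hAQ, Real.mul_rpow (abs_nonneg _) (div_pos hP0 hQ0).le, Real.div_rpow hP0.le hQ0.le,
    Real.rpow_sub hQ0, Real.rpow_one]
  field_simp

theorem stmt_9_general (n : ℕ) (k : ℕ) (hk1 : 1 ≤ k) (hkn : k ≤ n - 1)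
    (y t : ℕ → ℝ)
    (hymono : ∀ i, 1 ≤ i → i ≤ n - 1 → y i ≤ y (i + 1))
    (htsum : ∑ i ∈ Finset.Icc 1 n, t i = 1)
    (hzero : ∑ i ∈ Finset.Icc 1 n, t i * y i = 0)
    (hpartial : ∀ j, 1 ≤ j → j ≤ n →
      0 ≤ ∑ i ∈ Finset.Icc 1 j, t i ∧ ∑ i ∈ Finset.Icc 1 j, t i ≤ 1)
    (hmaxk : ∀ j, j ≤ k → ∑ i ∈ Finset.Icc 1 j, t i ≤ ∑ i ∈ Finset.Icc 1 k, t i)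
    (hblock : ∀ l, k + 1 ≤ l → l ≤ n →
      0 ≤ ∑ i ∈ Finset.Icc (k + 1) l, t i ∧
        ∑ i ∈ Finset.Icc (k + 1) l, t i ≤ ∑ i ∈ Finset.Icc (k + 1) n, t i)
    (P : ℝ) (hP : P = ∑ i ∈ Finset.Icc 1 k, t i) (hP0 : 0 < P) (hP1 : P < 1)
    (r : ℝ) (hr : 1 ≤ r) :
    |(∑ i ∈ Finset.Icc 1 k, t i * y i) / P| ≤
      ((∑ i ∈ Finset.Icc 1 n, t i * |y i| ^ (2*r)) /
        (P + P ^ (2*r) * (1 - P) ^ (1 - 2*r))) ^ (1/(2*r)) := by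
  have hsplit (F : ℕ → ℝ) :
      ∑ i ∈ Icc 1 k, F i + ∑ i ∈ Icc (k + 1) n, F i = ∑ i ∈ Icc 1 n, F i := by
    rw [Icc_add_one_left_eq_Ioc]; exact sum_Icc_add_sum_Ioc F hk1 (by omega)
  have hQ : ∑ i ∈ Icc (k + 1) n, t i = 1 - P := by linarith [hsplit t]
  have hB : ∑ i ∈ Icc (k + 1) n, t i * y i = -∑ i ∈ Icc 1 k, t i * y i := by
    linarith [hsplit (fun i => t i * y i)]
  have hy : MonotoneOn y (Set.Icc 1 n) := monotoneOn_of_le_succ Set.ordConnected_Icc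
    fun i _ hi hi' => hymono i hi.1 (Nat.le_sub_one_of_lt hi'.2)
  have hf := convexOn_abs_rpow (p := 2 * r) (by linarith)
  have hJ₁ := hf.jensen_steffensen (hy.mono (Set.Icc_subset_Icc_right (by omega)))
    (fun j hj => by obtain ⟨h1, h2⟩ := mem_Ico.1 hj; exact (hpartial j h1 (by omega)).1)
    (fun j hj => hmaxk j (mem_Ico.1 hj).2.le) (hP ▸ hP0)
  have hJ₂ := hf.jensen_steffensen (hy.mono (Set.Icc_subset_Icc_left (by omega)))
    (fun j hj => (hblock j (mem_Ico.1 hj).1 (mem_Ico.1 hj).2.le).1)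
    (fun j hj => (hblock j (mem_Ico.1 hj).1 (mem_Ico.1 hj).2.le).2) (by linarith)
  rw [← hP] at hJ₁
  rw [hQ, hB] at hJ₂
  have hbound := (mul_abs_div_rpow_add_mul_abs_neg_div_rpow
    (∑ i ∈ Icc 1 k, t i * y i) hP0 hP1 (2 * r)).symm.trans_le
      ((add_le_add hJ₁ hJ₂).trans_eq (hsplit _))
  have hD : 0 < P + P ^ (2 * r) * (1 - P) ^ (1 - 2 * r) := by
    have := sub_pos.2 hP1; positivity
  rw [one_div, Real.le_rpow_inv_iff_of_pos (abs_nonneg _) ?_ (by linarith), le_div_iff₀ hD]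
  · exact hbound
  · exact div_nonneg (le_trans (by positivity) hbound) hD.le

/-- Theorem 7 of the paper: block average bound with Jensen–Steffensen type
coefficients (not necessarily nonnegative). -/
theorem stmt_9 (n : ℕ) (hn : 2 ≤ n) (k : ℕ) (hk1 : 1 ≤ k) (hkn : k ≤ n - 1)
    (y t : ℕ → ℝ)
    (hymono : ∀ i, 1 ≤ i → i ≤ n - 1 → y i ≤ y (i + 1))
    (htsum : ∑ i ∈ Finset.Icc 1 n, t i = 1)
    (hzero : ∑ i ∈ Finset.Icc 1 n, t i * y i = 0)
    (hpartial : ∀ j, 1 ≤ j → j ≤ n →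
      0 ≤ ∑ i ∈ Finset.Icc 1 j, t i ∧ ∑ i ∈ Finset.Icc 1 j, t i ≤ 1)
    (hmaxk : ∀ j, j ≤ k → ∑ i ∈ Finset.Icc 1 j, t i ≤ ∑ i ∈ Finset.Icc 1 k, t i)
    (htk1 : 0 < t (k + 1))
    (hblock : ∀ l, k + 1 ≤ l → l ≤ n →
      0 ≤ ∑ i ∈ Finset.Icc (k + 1) l, t i ∧
        ∑ i ∈ Finset.Icc (k + 1) l, t i ≤ ∑ i ∈ Finset.Icc (k + 1) n, t i)
    (P : ℝ) (hP : P = ∑ i ∈ Finset.Icc 1 k, t i) (hP0 : 0 < P) (hP1 : P < 1)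
    (r : ℝ) (hr : 1 ≤ r) :
    |(∑ i ∈ Finset.Icc 1 k, t i * y i) / P| ≤
      ((∑ i ∈ Finset.Icc 1 n, t i * |y i| ^ (2*r)) /
        (P + P ^ (2*r) * (1 - P) ^ (1 - 2*r))) ^ (1/(2*r)) :=
  stmt_9_general n k hk1 hkn y t hymono htsum hzero hpartial hmaxk hblock P hP hP0 hP1 r hr
end

section
/- Let n ≥ 2 be an integer, let r ≥ 1 be a real number, let b ≤ ∞, let x₁,…,xₙ ∈ [0,b), and let t₁,…,tₙ > 0 with Σ_{i=1}^n tᵢ = 1. Set x̄ = Σ_{i=1}^n tᵢxᵢ, and for 1 ≤ k ≤ j ≤ n with S := Σ_{i=k}^{j} tᵢ < 1 let x_{k,j} = Σ_{i=k}^{j} tᵢxᵢ / S. Then |x_{k,j} − x̄| ≤ ( Σ_{i=1}^n tᵢ|xᵢ − x̄|^{2r} / ( S + S^{2r}·(1−S)^{1−2r} ) )^{1/(2r)} ≤ ( ( Σ_{i=1}^n tᵢxᵢ^{2r} − x̄^{2r} ) / ( S + S^{2r}·(1−S)^{1−2r} ) )^{1/(2r)}. -/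
/-!
Let `d` be the deviation of the block mean from `x̄`. The block carries total weighted deviation
`S * d` and its complement, of mass `1 - S`, carries `-(S * d)`; Jensen's inequality for
`|·| ^ p` on each part bounds the `p`-th central moment from below by
`(S + S ^ p * (1 - S) ^ (1 - p)) * |d| ^ p`.
For `p ≥ 2` the function `x ↦ x ^ p` is superquadratic, which follows from the superadditivity of
`x ↦ x ^ (p - 1)` by a monotonicity argument; summing the superquadratic inequality at `x̄` against
the weights bounds that central moment by the Jensen gap `∑ tᵢ xᵢ ^ p - x̄ ^ p`.
-/

open Finset Real

namespace Real

variable {p c y : ℝ}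

lemma rpow_sub_one_mul_self (hc : 0 ≤ c) (hp : p ≠ 0) : c ^ (p - 1) * c = c ^ p := by
  rw [← rpow_add_one' hc (by simpa using hp), sub_add_cancel]

lemma rpow_superquadratic_of_le (hp : 2 ≤ p) (hc : 0 ≤ c) (hcy : c ≤ y) :
    c ^ p + p * c ^ (p - 1) * (y - c) + (y - c) ^ p ≤ y ^ p := by
  have hp1 : 1 ≤ p := by linarith
  let G : ℝ → ℝ := fun u ↦ u ^ p - p * c ^ (p - 1) * u - (u - c) ^ p
  have hG : ∀ u, HasDerivAt G (p * u ^ (p - 1) - p * c ^ (p - 1) - p * (u - c) ^ (p - 1)) u :=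
    fun u ↦ ((((hasDerivAt_id' u).rpow_const (Or.inr hp1)).fun_sub
      ((hasDerivAt_id' u).const_mul (p * c ^ (p - 1)))).fun_sub
      (((hasDerivAt_id' u).sub_const c).rpow_const (Or.inr hp1))).congr_deriv (by ring)
  have hmono : MonotoneOn G (Set.Ici c) := by
    refine monotoneOn_of_hasDerivWithinAt_nonneg (convex_Ici c)
      (fun u _ ↦ (hG u).continuousAt.continuousWithinAt) (fun u _ ↦ (hG u).hasDerivWithinAt)
      fun u hu ↦ ?_
    rw [interior_Ici, Set.mem_Ioi] at hu
    have := add_rpow_le_rpow_add hc (sub_nonneg.2 hu.le) (by linarith : 1 ≤ p - 1)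
    rw [add_sub_cancel] at this
    nlinarith
  have := hmono Set.self_mem_Ici hcy hcy
  simp only [G, sub_self, zero_rpow (by linarith : p ≠ 0)] at this
  nlinarith [rpow_sub_one_mul_self hc (by linarith : p ≠ 0)]

lemma rpow_superquadratic_of_ge (hp : 2 ≤ p) (hy : 0 ≤ y) (hyc : y ≤ c) :
    c ^ p + p * c ^ (p - 1) * (y - c) + (c - y) ^ p ≤ y ^ p := by
  have hp1 : 1 ≤ p := by linarith
  let G : ℝ → ℝ := fun u ↦ u ^ p - p * c ^ (p - 1) * u - (c - u) ^ p
  have hG : ∀ u, HasDerivAt G (p * u ^ (p - 1) - p * c ^ (p - 1) + p * (c - u) ^ (p - 1)) u :=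
    fun u ↦ ((((hasDerivAt_id' u).rpow_const (Or.inr hp1)).fun_sub
      ((hasDerivAt_id' u).const_mul (p * c ^ (p - 1)))).fun_sub
      (((hasDerivAt_id' u).const_sub c).rpow_const (Or.inr hp1))).congr_deriv (by ring)
  have hanti : AntitoneOn G (Set.Icc 0 c) := by
    refine antitoneOn_of_hasDerivWithinAt_nonpos (convex_Icc 0 c)
      (fun u _ ↦ (hG u).continuousAt.continuousWithinAt) (fun u _ ↦ (hG u).hasDerivWithinAt)
      fun u hu ↦ ?_
    rw [interior_Icc, Set.mem_Ioo] at hu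
    have := add_rpow_le_rpow_add hu.1.le (sub_nonneg.2 hu.2.le) (by linarith : 1 ≤ p - 1)
    rw [add_sub_cancel] at this
    nlinarith
  have := hanti ⟨hy, hyc⟩ ⟨hy.trans hyc, le_rfl⟩ hyc
  simp only [G, sub_self, zero_rpow (by linarith : p ≠ 0)] at this
  nlinarith [rpow_sub_one_mul_self (hy.trans hyc) (by linarith : p ≠ 0)]

theorem rpow_superquadratic (hp : 2 ≤ p) (hc : 0 ≤ c) (hy : 0 ≤ y) :
    c ^ p + p * c ^ (p - 1) * (y - c) + |y - c| ^ p ≤ y ^ p := by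
  rcases le_total c y with hcy | hyc
  · rw [abs_of_nonneg (sub_nonneg.2 hcy)]
    exact rpow_superquadratic_of_le hp hc hcy
  · rw [abs_sub_comm, abs_of_nonneg (sub_nonneg.2 hyc)]
    exact rpow_superquadratic_of_ge hp hy hyc

end Real

section WeightedSums

variable {ι : Type*} {s : Finset ι} {w x : ι → ℝ} {p : ℝ}

lemma sum_mul_sub_weighted_mean (hw : ∑ i ∈ s, w i = 1) :
    ∑ i ∈ s, w i * (x i - ∑ j ∈ s, w j * x j) = 0 := by
  simp only [mul_sub, sum_sub_distrib, ← sum_mul, hw, one_mul, sub_self]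

theorem sum_mul_abs_sub_rpow_le_jensen_gap (hp : 2 ≤ p) (hw : ∀ i ∈ s, 0 ≤ w i)
    (hx : ∀ i ∈ s, 0 ≤ x i) (hw1 : ∑ i ∈ s, w i = 1) :
    ∑ i ∈ s, w i * |x i - ∑ j ∈ s, w j * x j| ^ p ≤
      ∑ i ∈ s, w i * x i ^ p - (∑ i ∈ s, w i * x i) ^ p := by
  set m := ∑ i ∈ s, w i * x i
  have hm : 0 ≤ m := sum_nonneg fun i hi ↦ mul_nonneg (hw i hi) (hx i hi)
  have tangent := sum_le_sum fun i hi ↦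
    mul_le_mul_of_nonneg_left (rpow_superquadratic hp hm (hx i hi)) (hw i hi)
  have expand : ∑ i ∈ s, w i * (m ^ p + p * m ^ (p - 1) * (x i - m) + |x i - m| ^ p) =
      m ^ p + p * m ^ (p - 1) * ∑ i ∈ s, w i * (x i - m) + ∑ i ∈ s, w i * |x i - m| ^ p := by
    simp only [mul_add, sum_add_distrib, ← sum_mul, hw1, one_mul, mul_sum]
    congr 2
    exact sum_congr rfl fun i _ ↦ by ring
  rw [expand, sum_mul_sub_weighted_mean hw1, mul_zero, add_zero] at tangent
  linarith

theorem mul_abs_rpow_le_sum_mul_abs_rpow {W a : ℝ} (hp : 1 ≤ p) (hw : ∀ i ∈ s, 0 ≤ w i)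
    (hW : 0 < W) (hWs : ∑ i ∈ s, w i = W) (ha : ∑ i ∈ s, w i * x i = W * a) :
    W * |a| ^ p ≤ ∑ i ∈ s, w i * |x i| ^ p := by
  have hnorm : ∀ i ∈ s, 0 ≤ w i / W := fun i hi ↦ div_nonneg (hw i hi) hW.le
  have hnorm1 : ∑ i ∈ s, w i / W = 1 := by rw [← sum_div, hWs, div_self hW.ne']
  have htri : |a| ≤ ∑ i ∈ s, w i / W * |x i| := by
    calc |a| = |∑ i ∈ s, w i / W * x i| := by
          simp_rw [div_mul_eq_mul_div, ← sum_div, ha, mul_div_cancel_left₀ _ hW.ne']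
      _ ≤ ∑ i ∈ s, |w i / W * x i| := abs_sum_le_sum_abs _ _
      _ = ∑ i ∈ s, w i / W * |x i| :=
          sum_congr rfl fun i hi ↦ by rw [abs_mul, abs_of_nonneg (hnorm i hi)]
  have hjensen : |a| ^ p ≤ ∑ i ∈ s, w i / W * |x i| ^ p :=
    (rpow_le_rpow (abs_nonneg a) htri (by linarith)).trans
      (rpow_arith_mean_le_arith_mean_rpow s _ _ hnorm hnorm1 (fun i _ ↦ abs_nonneg _) hp)
  calc W * |a| ^ p ≤ W * ∑ i ∈ s, w i / W * |x i| ^ p := by gcongr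
    _ = ∑ i ∈ s, w i * |x i| ^ p := by
      rw [mul_sum]; exact sum_congr rfl fun i _ ↦ by field_simp

theorem mul_abs_block_mean_sub_mean_rpow_le {u : Finset ι} (hsu : s ⊆ u) (hp : 1 ≤ p)
    (hw : ∀ i ∈ u, 0 ≤ w i) (hw1 : ∑ i ∈ u, w i = 1) {S : ℝ} (hS : ∑ i ∈ s, w i = S)
    (hS0 : 0 < S) (hS1 : S < 1) :
    (S + S ^ p * (1 - S) ^ (1 - p)) *
        |(∑ i ∈ s, w i * x i) / S - ∑ i ∈ u, w i * x i| ^ p ≤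
      ∑ i ∈ u, w i * |x i - ∑ j ∈ u, w j * x j| ^ p := by
  classical
  set m := ∑ i ∈ u, w i * x i
  set d := (∑ i ∈ s, w i * x i) / S - m
  have hT : 0 < 1 - S := sub_pos.2 hS1
  have hblock : ∑ i ∈ s, w i * (x i - m) = S * d := by
    simp only [d, mul_sub, sum_sub_distrib, ← sum_mul, hS]
    field_simp
  have hrest : ∑ i ∈ u \ s, w i * (x i - m) = (1 - S) * (-(S * d) / (1 - S)) := by
    rw [sum_sdiff_eq_sub hsu, sum_mul_sub_weighted_mean hw1, hblock]
    field_simp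
    ring
  have hrestw : ∑ i ∈ u \ s, w i = 1 - S := by rw [sum_sdiff_eq_sub hsu, hw1, hS]
  have hB := mul_abs_rpow_le_sum_mul_abs_rpow hp (fun i hi ↦ hw i (hsu hi)) hS0 hS hblock
  have hC := mul_abs_rpow_le_sum_mul_abs_rpow hp (fun i hi ↦ hw i (sdiff_subset hi)) hT hrestw
    hrest
  have hCeq : (1 - S) * |-(S * d) / (1 - S)| ^ p = S ^ p * (1 - S) ^ (1 - p) * |d| ^ p := by
    rw [abs_div, abs_neg, abs_mul, abs_of_pos hS0, abs_of_pos hT,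
      div_rpow (by positivity) hT.le, mul_rpow hS0.le (abs_nonneg d), rpow_sub hT, rpow_one]
    field_simp
  rw [← sum_sdiff hsu]
  linarith

end WeightedSums

theorem stmt_10_general (n : ℕ) (r : ℝ) (hr : 1 ≤ r)
    (b : EReal) (x t : ℕ → ℝ)
    (hx : ∀ i ∈ Finset.Icc 1 n, 0 ≤ x i ∧ (x i : EReal) < b)
    (ht : ∀ i ∈ Finset.Icc 1 n, 0 < t i)
    (htsum : ∑ i ∈ Finset.Icc 1 n, t i = 1)
    (xbar : ℝ) (hxbar : xbar = ∑ i ∈ Finset.Icc 1 n, t i * x i)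
    (k j : ℕ) (hk : 1 ≤ k) (hkj : k ≤ j) (hjn : j ≤ n)
    (S : ℝ) (hS : S = ∑ i ∈ Finset.Icc k j, t i) (hS1 : S < 1) :
    |(∑ i ∈ Finset.Icc k j, t i * x i) / S - xbar| ≤
      ((∑ i ∈ Finset.Icc 1 n, t i * |x i - xbar| ^ (2*r)) /
        (S + S ^ (2*r) * (1 - S) ^ (1 - 2*r))) ^ (1/(2*r)) ∧
    ((∑ i ∈ Finset.Icc 1 n, t i * |x i - xbar| ^ (2*r)) /
        (S + S ^ (2*r) * (1 - S) ^ (1 - 2*r))) ^ (1/(2*r)) ≤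
      (((∑ i ∈ Finset.Icc 1 n, t i * x i ^ (2*r)) - xbar ^ (2*r)) /
        (S + S ^ (2*r) * (1 - S) ^ (1 - 2*r))) ^ (1/(2*r)) := by
  have hw : ∀ i ∈ Icc 1 n, 0 ≤ t i := fun i hi ↦ (ht i hi).le
  have hsub : Icc k j ⊆ Icc 1 n := Icc_subset_Icc hk hjn
  have hS0 : 0 < S := hS ▸ sum_pos (fun i hi ↦ ht i (hsub hi)) (nonempty_Icc.2 hkj)
  have hD : 0 < S + S ^ (2 * r) * (1 - S) ^ (1 - 2 * r) :=
    add_pos_of_pos_of_nonneg hS0 (mul_nonneg (rpow_nonneg hS0.le _)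
      (rpow_nonneg (sub_nonneg.2 hS1.le) _))
  have hN : 0 ≤ ∑ i ∈ Icc 1 n, t i * |x i - xbar| ^ (2 * r) :=
    sum_nonneg fun i hi ↦ mul_nonneg (hw i hi) (rpow_nonneg (abs_nonneg _) _)
  have hblock := hxbar ▸ mul_abs_block_mean_sub_mean_rpow_le hsub (by linarith : 1 ≤ 2 * r) hw
    htsum hS.symm hS0 hS1
  have hgap := hxbar ▸ sum_mul_abs_sub_rpow_le_jensen_gap (by linarith : 2 ≤ 2 * r) hw
    (fun i hi ↦ (hx i hi).1) htsum
  refine ⟨?_, by gcongr⟩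
  rw [one_div, le_rpow_inv_iff_of_pos (abs_nonneg _) (div_nonneg hN hD.le) (by positivity),
    le_div_iff₀ hD, mul_comm]
  exact hblock

/-- Corollary 1 a. of the paper: block average deviation bound together with
the superquadratic (Jensen-gap) bound for `x ↦ x^(2r)` on `[0, b)`, `b ≤ ∞`. -/
theorem stmt_10 (n : ℕ) (hn : 2 ≤ n) (r : ℝ) (hr : 1 ≤ r)
    (b : EReal) (x t : ℕ → ℝ)
    (hx : ∀ i ∈ Finset.Icc 1 n, 0 ≤ x i ∧ (x i : EReal) < b)
    (ht : ∀ i ∈ Finset.Icc 1 n, 0 < t i)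
    (htsum : ∑ i ∈ Finset.Icc 1 n, t i = 1)
    (xbar : ℝ) (hxbar : xbar = ∑ i ∈ Finset.Icc 1 n, t i * x i)
    (k j : ℕ) (hk : 1 ≤ k) (hkj : k ≤ j) (hjn : j ≤ n)
    (S : ℝ) (hS : S = ∑ i ∈ Finset.Icc k j, t i) (hS1 : S < 1) :
    |(∑ i ∈ Finset.Icc k j, t i * x i) / S - xbar| ≤
      ((∑ i ∈ Finset.Icc 1 n, t i * |x i - xbar| ^ (2*r)) /
        (S + S ^ (2*r) * (1 - S) ^ (1 - 2*r))) ^ (1/(2*r)) ∧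
    ((∑ i ∈ Finset.Icc 1 n, t i * |x i - xbar| ^ (2*r)) /
        (S + S ^ (2*r) * (1 - S) ^ (1 - 2*r))) ^ (1/(2*r)) ≤
      (((∑ i ∈ Finset.Icc 1 n, t i * x i ^ (2*r)) - xbar ^ (2*r)) /
        (S + S ^ (2*r) * (1 - S) ^ (1 - 2*r))) ^ (1/(2*r)) :=
  stmt_10_general n r hr b x t hx ht htsum xbar hxbar k j hk hkj hjn S hS hS1
end

section
/- Let a < b be reals, let r ≥ 1 be a real number, and let f : [a,b) → ℝ be uniformly convex with modulus Φ(x) = x^{2r}, i.e. t·f(x) + (1−t)·f(y) ≥ f(t·x + (1−t)·y) + t·(1−t)·|x−y|^{2r} for all x, y ∈ [a,b) and t ∈ [0,1]. Let n ≥ 2 be an integer, let x₁,…,xₙ ∈ [a,b), let t₁,…,tₙ > 0 with Σ_{i=1}^n tᵢ = 1, set x̄ = Σ_{i=1}^n tᵢxᵢ, and for 1 ≤ k ≤ j ≤ n with S := Σ_{i=k}^{j} tᵢ < 1 let x_{k,j} = Σ_{i=k}^{j} tᵢxᵢ / S. Then |x_{k,j} − x̄| ≤ ( Σ_{i=1}^n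 tᵢ|xᵢ − x̄|^{2r} / ( S + S^{2r}·(1−S)^{1−2r} ) )^{1/(2r)} ≤ ( ( Σ_{i=1}^n tᵢf(xᵢ) − f(x̄) ) / ( S + S^{2r}·(1−S)^{1−2r} ) )^{1/(2r)}. -/
lemma convexOn_abs_sub_rpow (c q : ℝ) (hq : 1 ≤ q) :
    ConvexOn ℝ Set.univ (fun u : ℝ => |u - c| ^ q) := by
  refine ⟨convex_univ, fun u _ v _ s w hs hw hsw => ?_⟩
  simp only [smul_eq_mul]
  have h1 : |s * u + w * v - c| ≤ s * |u - c| + w * |v - c| := by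
    have he : s * u + w * v - c = s * (u - c) + w * (v - c) := by
      linear_combination c * hsw
    rw [he]
    calc |s * (u - c) + w * (v - c)| ≤ |s * (u - c)| + |w * (v - c)| := abs_add_le _ _
      _ = s * |u - c| + w * |v - c| := by
          rw [abs_mul, abs_mul, abs_of_nonneg hs, abs_of_nonneg hw]
  calc |s * u + w * v - c| ^ q ≤ (s * |u - c| + w * |v - c|) ^ q :=
        Real.rpow_le_rpow (abs_nonneg _) h1 (by linarith)
    _ ≤ s * |u - c| ^ q + w * |v - c| ^ q := by
        have h2 := (convexOn_rpow hq).2 (Set.mem_Ici.2 (abs_nonneg (u - c)))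
          (Set.mem_Ici.2 (abs_nonneg (v - c))) hs hw hsw
        simpa using h2

lemma slope_star (a b q : ℝ) (hq2 : 2 ≤ q) (f : ℝ → ℝ)
    (hf : ∀ x ∈ Set.Ico a b, ∀ y ∈ Set.Ico a b, ∀ s ∈ Set.Icc (0:ℝ) 1,
      f (s * x + (1 - s) * y) + s * (1 - s) * |x - y| ^ q
        ≤ s * f x + (1 - s) * f y)
    (xbar u v : ℝ) (hu : u ∈ Set.Ico a b) (hv : v ∈ Set.Ico a b)
    (h1 : u < xbar) (h2 : xbar < v) :
    (f xbar - f u + (xbar - u) ^ q) * (v - xbar)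
      ≤ (f v - f xbar - (v - xbar) ^ q) * (xbar - u) := by
  have hD : (0:ℝ) < v - u := by linarith
  set s : ℝ := (xbar - u) / (v - u) with hs_def
  have hs0 : 0 < s := div_pos (by linarith) hD
  have hs1 : s < 1 := (div_lt_one hD).2 (by linarith)
  have hxu : xbar - u = s * (v - u) := (div_mul_cancel₀ _ hD.ne').symm
  have hvx : v - xbar = (1 - s) * (v - u) := by
    rw [sub_mul, one_mul, ← hxu]; ring
  have hcomb : s * v + (1 - s) * u = xbar := by linear_combination -hxu
  have habs : |v - u| = v - u := abs_of_pos hD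
  have hfv := hf v hv u hu s ⟨hs0.le, hs1.le⟩
  rw [hcomb, habs] at hfv
  set P : ℝ := (v - u) ^ q with hP
  have hPpos : 0 < P := Real.rpow_pos_of_pos hD q
  have hE1 : (xbar - u) ^ q = s * s ^ (q - 1) * P := by
    rw [hxu, Real.mul_rpow hs0.le hD.le]
    have : s ^ q = s * s ^ (q - 1) := by
      rw [show q = 1 + (q - 1) by ring, Real.rpow_add hs0, Real.rpow_one]; ring_nf
    rw [this]
  have hE2 : (v - xbar) ^ q = (1 - s) * (1 - s) ^ (q - 1) * P := by
    rw [hvx, Real.mul_rpow (by linarith) hD.le]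
    have h1s : (0:ℝ) < 1 - s := by linarith
    have : (1 - s) ^ q = (1 - s) * (1 - s) ^ (q - 1) := by
      rw [show q = 1 + (q - 1) by ring, Real.rpow_add h1s, Real.rpow_one]; ring_nf
    rw [this]
  have hkey : s ^ (q - 1) + (1 - s) ^ (q - 1) ≤ 1 := by
    have k1 : s ^ (q - 1) ≤ s ^ (1:ℝ) :=
      Real.rpow_le_rpow_of_exponent_ge hs0 hs1.le (by linarith)
    have k2 : (1 - s) ^ (q - 1) ≤ (1 - s) ^ (1:ℝ) :=
      Real.rpow_le_rpow_of_exponent_ge (by linarith) (by linarith) (by linarith)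
    rw [Real.rpow_one] at k1 k2
    linarith
  rw [hE1, hE2, hxu, hvx]
  set E1 := s ^ (q - 1)
  set E2 := (1 - s) ^ (q - 1)
  have hE1pos : 0 < E1 := Real.rpow_pos_of_pos hs0 _
  have hE2pos : 0 < E2 := Real.rpow_pos_of_pos (by linarith) _
  nlinarith [mul_le_mul_of_nonneg_right hfv hD.le,
    mul_le_mul_of_nonneg_right hkey
      (mul_pos (mul_pos (mul_pos hs0 (by linarith : (0:ℝ) < 1 - s)) hPpos) hD).le,
    mul_pos hs0 (by linarith : (0:ℝ) < 1 - s)]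

/-- Corollary 1 b. of the paper: block average deviation bound together with
the Jensen-gap bound for `f` uniformly convex with modulus `Φ(x) = x^(2r)`. -/
theorem stmt_12 (a b : ℝ) (hab : a < b) (r : ℝ) (hr : 1 ≤ r)
    (f : ℝ → ℝ)
    (hf : ∀ x ∈ Set.Ico a b, ∀ y ∈ Set.Ico a b, ∀ s ∈ Set.Icc (0:ℝ) 1,
      f (s * x + (1 - s) * y) + s * (1 - s) * |x - y| ^ (2*r)
        ≤ s * f x + (1 - s) * f y)
    (n : ℕ) (hn : 2 ≤ n) (x t : ℕ → ℝ)
    (hx : ∀ i ∈ Finset.Icc 1 n, x i ∈ Set.Ico a b)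
    (ht : ∀ i ∈ Finset.Icc 1 n, 0 < t i)
    (htsum : ∑ i ∈ Finset.Icc 1 n, t i = 1)
    (xbar : ℝ) (hxbar : xbar = ∑ i ∈ Finset.Icc 1 n, t i * x i)
    (k j : ℕ) (hk : 1 ≤ k) (hkj : k ≤ j) (hjn : j ≤ n)
    (S : ℝ) (hS : S = ∑ i ∈ Finset.Icc k j, t i) (hS1 : S < 1) :
    |(∑ i ∈ Finset.Icc k j, t i * x i) / S - xbar| ≤
      ((∑ i ∈ Finset.Icc 1 n, t i * |x i - xbar| ^ (2*r)) /
        (S + S ^ (2*r) * (1 - S) ^ (1 - 2*r))) ^ (1/(2*r)) ∧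
    ((∑ i ∈ Finset.Icc 1 n, t i * |x i - xbar| ^ (2*r)) /
        (S + S ^ (2*r) * (1 - S) ^ (1 - 2*r))) ^ (1/(2*r)) ≤
      (((∑ i ∈ Finset.Icc 1 n, t i * f (x i)) - f xbar) /
        (S + S ^ (2*r) * (1 - S) ^ (1 - 2*r))) ^ (1/(2*r)) := by
  have hq2 : (2:ℝ) ≤ 2*r := by linarith
  have hq1 : (1:ℝ) ≤ 2*r := by linarith
  have hq0 : (0:ℝ) < 2*r := by linarith
  have hBne : (Finset.Icc k j).Nonempty := Finset.nonempty_Icc.2 hkj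
  have hBI : Finset.Icc k j ⊆ Finset.Icc 1 n := Finset.Icc_subset_Icc hk hjn
  have hS0 : 0 < S := by
    rw [hS]; exact Finset.sum_pos (fun i hi => ht i (hBI hi)) hBne
  have h1S : 0 < 1 - S := by linarith
  have hDpos : 0 < S + S ^ (2*r) * (1 - S) ^ (1 - 2*r) :=
    add_pos hS0 (mul_pos (Real.rpow_pos_of_pos hS0 _) (Real.rpow_pos_of_pos h1S _))
  have hA0 : 0 ≤ ∑ i ∈ Finset.Icc 1 n, t i * |x i - xbar| ^ (2*r) :=
    Finset.sum_nonneg fun i hi =>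
      mul_nonneg (ht i hi).le (Real.rpow_nonneg (abs_nonneg _) _)
  have hoq : (0:ℝ) ≤ 1/(2*r) := le_of_lt (by positivity)
  -- ∑ tᵢ (xᵢ - x̄) = 0
  have hsum0 : ∑ i ∈ Finset.Icc 1 n, t i * (x i - xbar) = 0 := by
    have he : ∑ i ∈ Finset.Icc 1 n, t i * (x i - xbar)
        = (∑ i ∈ Finset.Icc 1 n, t i * x i) - (∑ i ∈ Finset.Icc 1 n, t i) * xbar := by
      rw [Finset.sum_mul, ← Finset.sum_sub_distrib]
      exact Finset.sum_congr rfl fun i _ => by ring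
    rw [he, htsum, hxbar]; ring
  ----------------------------------------------------------------
  -- Part B : Jensen gap with modulus, via a supporting slope m
  ----------------------------------------------------------------
  have hm : ∃ m : ℝ, ∀ i ∈ Finset.Icc 1 n,
      m * (x i - xbar) ≤ f (x i) - f xbar - |x i - xbar| ^ (2*r) := by
    by_cases hL : ((Finset.Icc 1 n).filter (fun i => x i < xbar)).Nonempty
    · obtain ⟨i₀, hi₀mem, hi₀max⟩ := Finset.exists_max_image _
        (fun i => (f (x i) - f xbar - |x i - xbar| ^ (2*r)) / (x i - xbar)) hL
      have hi₀I : i₀ ∈ Finset.Icc 1 n := (Finset.mem_filter.1 hi₀mem).1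
      have hi₀lt : x i₀ < xbar := (Finset.mem_filter.1 hi₀mem).2
      set u := x i₀ with hu_def
      set m := (f u - f xbar - |u - xbar| ^ (2*r)) / (u - xbar) with hm_def
      have hmN : m = (f xbar - f u + (xbar - u) ^ (2*r)) / (xbar - u) := by
        rw [hm_def, abs_of_nonpos (by linarith : u - xbar ≤ 0), neg_sub,
          div_eq_div_iff (by linarith : u - xbar ≠ 0) (by linarith : xbar - u ≠ 0)]
        ring
      refine ⟨m, fun i hi => ?_⟩
      rcases lt_trichotomy (x i) xbar with hlt | heq | hgt
      · have hQle := hi₀max i (Finset.mem_filter.2 ⟨hi, hlt⟩)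
        have hne : x i - xbar ≠ 0 := sub_ne_zero.2 (ne_of_lt hlt)
        have h' := mul_le_mul_of_nonpos_right hQle
          (by linarith : x i - xbar ≤ 0)
        rwa [div_mul_cancel₀ _ hne] at h'
      · rw [heq]; simp [Real.zero_rpow (ne_of_gt hq0)]
      · have hstar := slope_star a b (2*r) hq2 f hf xbar u (x i)
          (hx i₀ hi₀I) (hx i hi) hi₀lt hgt
        rw [hmN, div_mul_eq_mul_div, div_le_iff₀ (by linarith : (0:ℝ) < xbar - u)]
        calc (f xbar - f u + (xbar - u) ^ (2*r)) * (x i - xbar)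
            ≤ (f (x i) - f xbar - (x i - xbar) ^ (2*r)) * (xbar - u) := hstar
          _ = (f (x i) - f xbar - |x i - xbar| ^ (2*r)) * (xbar - u) := by
              rw [abs_of_pos (show (0:ℝ) < x i - xbar by linarith)]
    · -- no point below x̄ ⇒ all xᵢ = x̄
      refine ⟨0, fun i hi => ?_⟩
      have hge : ∀ i ∈ Finset.Icc 1 n, xbar ≤ x i := by
        intro i' hi'
        by_contra hc
        push_neg at hc
        exact hL ⟨i', Finset.mem_filter.2 ⟨hi', hc⟩⟩
      have hall := (Finset.sum_eq_zero_iff_of_nonneg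
        (fun i' hi' => mul_nonneg (ht i' hi').le (by linarith [hge i' hi']))).1 hsum0
      have hxeq : x i = xbar := by
        have h0 := hall i hi
        rcases mul_eq_zero.1 h0 with h | h
        · exact absurd h (ne_of_gt (ht i hi))
        · linarith [sub_eq_zero.1 h]
      rw [hxeq]
      simp [Real.zero_rpow (ne_of_gt hq0)]
  obtain ⟨m, hm⟩ := hm
  have hGap : ∑ i ∈ Finset.Icc 1 n, t i * |x i - xbar| ^ (2*r)
      ≤ (∑ i ∈ Finset.Icc 1 n, t i * f (x i)) - f xbar := by
    have h1 : ∑ i ∈ Finset.Icc 1 n, t i * (m * (x i - xbar))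
        ≤ ∑ i ∈ Finset.Icc 1 n, t i * (f (x i) - f xbar - |x i - xbar| ^ (2*r)) :=
      Finset.sum_le_sum fun i hi => mul_le_mul_of_nonneg_left (hm i hi) (ht i hi).le
    have h2 : ∑ i ∈ Finset.Icc 1 n, t i * (m * (x i - xbar)) = 0 := by
      calc ∑ i ∈ Finset.Icc 1 n, t i * (m * (x i - xbar))
          = m * ∑ i ∈ Finset.Icc 1 n, t i * (x i - xbar) := by
            rw [Finset.mul_sum]; exact Finset.sum_congr rfl fun i _ => by ring
        _ = 0 := by rw [hsum0, mul_zero]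
    have h3 : ∑ i ∈ Finset.Icc 1 n, t i * (f (x i) - f xbar - |x i - xbar| ^ (2*r))
        = (∑ i ∈ Finset.Icc 1 n, t i * f (x i))
          - (∑ i ∈ Finset.Icc 1 n, t i) * f xbar
          - ∑ i ∈ Finset.Icc 1 n, t i * |x i - xbar| ^ (2*r) := by
      rw [Finset.sum_mul, ← Finset.sum_sub_distrib, ← Finset.sum_sub_distrib]
      exact Finset.sum_congr rfl fun i _ => by ring
    rw [htsum, one_mul] at h3
    linarith
  ----------------------------------------------------------------
  -- Part A : lower bound on A via Jensen for |· - x̄|^(2r)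
  ----------------------------------------------------------------
  have hφ := convexOn_abs_sub_rpow xbar (2*r) hq1
  -- block part
  have hSsum : 0 < ∑ i ∈ Finset.Icc k j, t i := by rw [← hS]; exact hS0
  have hJB := hφ.map_centerMass_le (t := Finset.Icc k j) (w := t) (p := x)
    (fun i hi => (ht i (hBI hi)).le) hSsum (fun i _ => Set.mem_univ _)
  have hcB : (Finset.Icc k j).centerMass t x
      = (∑ i ∈ Finset.Icc k j, t i * x i) / S := by
    rw [Finset.centerMass, ← hS]
    simp [smul_eq_mul, div_eq_inv_mul]
  have hcBf : (Finset.Icc k j).centerMass t ((fun u => |u - xbar| ^ (2*r)) ∘ x)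
      = (∑ i ∈ Finset.Icc k j, t i * |x i - xbar| ^ (2*r)) / S := by
    rw [Finset.centerMass, ← hS]
    simp [smul_eq_mul, div_eq_inv_mul, Function.comp]
  rw [hcB, hcBf] at hJB
  have hJB' : |(∑ i ∈ Finset.Icc k j, t i * x i) / S - xbar| ^ (2*r) * S
      ≤ ∑ i ∈ Finset.Icc k j, t i * |x i - xbar| ^ (2*r) :=
    (le_div_iff₀ hS0).1 hJB
  -- complement part
  have hCsum : ∑ i ∈ Finset.Icc 1 n \ Finset.Icc k j, t i = 1 - S := by
    rw [Finset.sum_sdiff_eq_sub hBI, htsum, hS]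
  have hC0 : 0 < ∑ i ∈ Finset.Icc 1 n \ Finset.Icc k j, t i := by
    rw [hCsum]; exact h1S
  have hJC := hφ.map_centerMass_le (t := Finset.Icc 1 n \ Finset.Icc k j)
    (w := t) (p := x)
    (fun i hi => (ht i (Finset.mem_sdiff.1 hi).1).le) hC0 (fun i _ => Set.mem_univ _)
  have hcC : (Finset.Icc 1 n \ Finset.Icc k j).centerMass t x
      = (∑ i ∈ Finset.Icc 1 n \ Finset.Icc k j, t i * x i) / (1 - S) := by
    rw [Finset.centerMass, hCsum]
    simp [smul_eq_mul, div_eq_inv_mul]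
  have hcCf : (Finset.Icc 1 n \ Finset.Icc k j).centerMass t
      ((fun u => |u - xbar| ^ (2*r)) ∘ x)
      = (∑ i ∈ Finset.Icc 1 n \ Finset.Icc k j, t i * |x i - xbar| ^ (2*r)) / (1 - S) := by
    rw [Finset.centerMass, hCsum]
    simp [smul_eq_mul, div_eq_inv_mul, Function.comp]
  rw [hcC, hcCf] at hJC
  have hJC' : |(∑ i ∈ Finset.Icc 1 n \ Finset.Icc k j, t i * x i) / (1 - S) - xbar| ^ (2*r)
      * (1 - S)
      ≤ ∑ i ∈ Finset.Icc 1 n \ Finset.Icc k j, t i * |x i - xbar| ^ (2*r) :=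
    (le_div_iff₀ h1S).1 hJC
  -- relation between the two block averages
  set xB : ℝ := (∑ i ∈ Finset.Icc k j, t i * x i) / S with hxB_def
  set y : ℝ := (∑ i ∈ Finset.Icc 1 n \ Finset.Icc k j, t i * x i) / (1 - S) with hy_def
  have hsplitx : (∑ i ∈ Finset.Icc 1 n \ Finset.Icc k j, t i * x i)
      + ∑ i ∈ Finset.Icc k j, t i * x i = ∑ i ∈ Finset.Icc 1 n, t i * x i :=
    Finset.sum_sdiff hBI
  have hrel : (1 - S) * (y - xbar) = -(S * (xB - xbar)) := by
    have e1 : S * xB = ∑ i ∈ Finset.Icc k j, t i * x i :=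
      mul_div_cancel₀ _ hS0.ne'
    have e2 : (1 - S) * y = ∑ i ∈ Finset.Icc 1 n \ Finset.Icc k j, t i * x i :=
      mul_div_cancel₀ _ h1S.ne'
    have e3 : S * xB + (1 - S) * y = xbar := by
      rw [e1, e2, hxbar, ← hsplitx]; ring
    linarith [e3]
  set d : ℝ := |xB - xbar| with hd_def
  set e : ℝ := |y - xbar| with he_def
  have hrel2 : (1 - S) * e = S * d := by
    have := congrArg abs hrel
    rwa [abs_neg, abs_mul, abs_mul, abs_of_pos h1S, abs_of_pos hS0] at this
  have he_eq : e = S * d / (1 - S) := by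
    rw [eq_div_iff h1S.ne']; linarith [hrel2]
  have hC2 : (1 - S) * e ^ (2*r) = S ^ (2*r) * (1 - S) ^ (1 - 2*r) * d ^ (2*r) := by
    rw [he_eq, Real.div_rpow (mul_nonneg hS0.le (abs_nonneg _)) h1S.le,
      Real.mul_rpow hS0.le (abs_nonneg _),
      show (1 - 2*r) = 1 - (2*r) by ring, Real.rpow_sub h1S, Real.rpow_one]
    have hne : (1 - S) ^ (2*r) ≠ 0 := (Real.rpow_pos_of_pos h1S _).ne'
    field_simp
    ring
  have hdq : d ^ (2*r) ≤ (∑ i ∈ Finset.Icc 1 n, t i * |x i - xbar| ^ (2*r)) /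
      (S + S ^ (2*r) * (1 - S) ^ (1 - 2*r)) := by
    rw [le_div_iff₀ hDpos]
    calc d ^ (2*r) * (S + S ^ (2*r) * (1 - S) ^ (1 - 2*r))
        = d ^ (2*r) * S + (1 - S) * e ^ (2*r) := by rw [hC2]; ring
      _ ≤ (∑ i ∈ Finset.Icc k j, t i * |x i - xbar| ^ (2*r))
          + (∑ i ∈ Finset.Icc 1 n \ Finset.Icc k j, t i * |x i - xbar| ^ (2*r)) := by
          linarith [hJB', hJC']
      _ = ∑ i ∈ Finset.Icc 1 n, t i * |x i - xbar| ^ (2*r) := by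
          rw [add_comm]; exact Finset.sum_sdiff hBI
  constructor
  · have hd0 : (0:ℝ) ≤ d := hd_def ▸ abs_nonneg _
    have hid : (d ^ (2*r)) ^ (1/(2*r)) = d := by
      rw [← Real.rpow_mul hd0, mul_one_div_cancel (ne_of_gt hq0),
        Real.rpow_one]
    calc d = (d ^ (2*r)) ^ (1/(2*r)) := hid.symm
      _ ≤ ((∑ i ∈ Finset.Icc 1 n, t i * |x i - xbar| ^ (2*r)) /
            (S + S ^ (2*r) * (1 - S) ^ (1 - 2*r))) ^ (1/(2*r)) :=
          Real.rpow_le_rpow (Real.rpow_nonneg (abs_nonneg _) _) hdq hoq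
  · exact Real.rpow_le_rpow (div_nonneg hA0 hDpos.le)
      (by gcongr) hoq
end

section
/- Let a < b be reals, let r ≥ 1 be a real number, and let f : [a,b) → ℝ be uniformly convex with modulus Φ(x) = x^{2r}, i.e. t·f(x) + (1−t)·f(y) ≥ f(t·x + (1−t)·y) + t·(1−t)·|x−y|^{2r} for all x, y ∈ [a,b) and t ∈ [0,1]. Let n ≥ 2 be an integer and let x₁ ≥ x₂ ≥ … ≥ xₙ with all xᵢ ∈ [a,b). Set x̄ = (1/n)·Σ_{i=1}^n xᵢ and x_{1,j} = (1/j)·Σ_{i=1}^{j} xᵢ. Then for every 1 ≤ j ≤ n−1, x_{1,j} ≤ x̄ + ( (1/n)·Σ_{i=1}^n |xᵢ − x̄|^{2r} / ( j/n + (j/n)^{2r}·(1 − j/n)^{1−2r} ) )^{1/(2r)} ≤ x̄ + ( ( (1/n)·Σ_{i=1}^n f(xᵢ) − f(x̄) ) / ( j/n + (j/n)^{2r}·(1 − j/n)^{1−2r} ) )^{1/(2r)}. -/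
private lemma aux_mean (s : Finset ℕ) (hs : s.Nonempty) (d : ℕ → ℝ) (p : ℝ) (hp : 1 ≤ p) :
    (s.card : ℝ) * |(∑ i ∈ s, d i) / s.card| ^ p ≤ ∑ i ∈ s, |d i| ^ p := by
  have hk : (0:ℝ) < s.card := by exact_mod_cast hs.card_pos
  have hp0 : (0:ℝ) ≤ p := le_trans zero_le_one hp
  have hw : ∑ _i ∈ s, (s.card:ℝ)⁻¹ = 1 := by
    rw [Finset.sum_const, nsmul_eq_mul, mul_inv_cancel₀ (ne_of_gt hk)]
  have h3 := Real.rpow_arith_mean_le_arith_mean_rpow s (fun _ => (s.card:ℝ)⁻¹)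
    (fun i => |d i|) (fun i _ => by positivity) hw (fun i _ => abs_nonneg _) hp
  have h1 : |(∑ i ∈ s, d i) / (s.card:ℝ)| ^ p ≤ (∑ i ∈ s, (s.card:ℝ)⁻¹ * |d i|) ^ p := by
    apply Real.rpow_le_rpow (abs_nonneg _) _ hp0
    rw [← Finset.mul_sum, abs_div, abs_of_pos hk, div_eq_inv_mul]
    exact mul_le_mul_of_nonneg_left (Finset.abs_sum_le_sum_abs d s) (by positivity)
  have h4 : |(∑ i ∈ s, d i) / (s.card:ℝ)| ^ p ≤ (s.card:ℝ)⁻¹ * ∑ i ∈ s, |d i| ^ p := by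
    rw [Finset.mul_sum]; exact h1.trans h3
  calc (s.card:ℝ) * |(∑ i ∈ s, d i) / s.card| ^ p
      ≤ (s.card:ℝ) * ((s.card:ℝ)⁻¹ * ∑ i ∈ s, |d i| ^ p) :=
        mul_le_mul_of_nonneg_left h4 hk.le
    _ = ∑ i ∈ s, |d i| ^ p := by field_simp


private lemma key_jensen (a b : ℝ) (r : ℝ) (hr : 1 ≤ r) (f : ℝ → ℝ)
    (hf : ∀ x ∈ Set.Ico a b, ∀ y ∈ Set.Ico a b, ∀ s ∈ Set.Icc (0:ℝ) 1,
      f (s * x + (1 - s) * y) + s * (1 - s) * |x - y| ^ (2*r)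
        ≤ s * f x + (1 - s) * f y)
    (n : ℕ) (hn : 1 ≤ n) (x : ℕ → ℝ)
    (hx : ∀ i ∈ Finset.Icc 1 n, x i ∈ Set.Ico a b)
    (xbar : ℝ) (hxbar : (n:ℝ) * xbar = ∑ i ∈ Finset.Icc 1 n, x i) :
    ∑ i ∈ Finset.Icc 1 n, |x i - xbar| ^ (2*r)
      ≤ (∑ i ∈ Finset.Icc 1 n, f (x i)) - n * f xbar := by
  have hN : (0:ℝ) < n := by exact_mod_cast hn
  have hcard : (Finset.Icc 1 n).card = n := by rw [Nat.card_Icc]; omega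
  have hne : (Finset.Icc 1 n).Nonempty := Finset.nonempty_Icc.mpr hn
  have hr2 : (0:ℝ) < 2*r := by linarith
  have hsum0 : ∑ i ∈ Finset.Icc 1 n, (x i - xbar) = 0 := by
    rw [Finset.sum_sub_distrib, Finset.sum_const, hcard, nsmul_eq_mul, ← hxbar, sub_self]
  have hxbarmem : xbar ∈ Set.Ico a b := by
    constructor
    · have h1 : (n:ℝ) * a ≤ (n:ℝ) * xbar := by
        rw [hxbar]
        calc (n:ℝ) * a = ∑ _i ∈ Finset.Icc 1 n, a := by
              rw [Finset.sum_const, hcard, nsmul_eq_mul]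
          _ ≤ ∑ i ∈ Finset.Icc 1 n, x i := Finset.sum_le_sum fun i hi => (hx i hi).1
      exact le_of_mul_le_mul_left h1 hN
    · have h1 : (n:ℝ) * xbar < (n:ℝ) * b := by
        rw [hxbar]
        calc ∑ i ∈ Finset.Icc 1 n, x i < ∑ _i ∈ Finset.Icc 1 n, b :=
              Finset.sum_lt_sum_of_nonempty hne fun i hi => (hx i hi).2
          _ = (n:ℝ) * b := by rw [Finset.sum_const, hcard, nsmul_eq_mul]
      exact lt_of_mul_lt_mul_left h1 hN.le
  by_cases hall : ∀ i ∈ Finset.Icc 1 n, x i = xbar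
  · have hL : ∑ i ∈ Finset.Icc 1 n, |x i - xbar| ^ (2*r) = 0 :=
      Finset.sum_eq_zero fun i hi => by
        rw [hall i hi, sub_self, abs_zero, Real.zero_rpow (ne_of_gt hr2)]
    have hR : ∑ i ∈ Finset.Icc 1 n, f (x i) = (n:ℝ) * f xbar := by
      rw [Finset.sum_congr rfl (fun i hi => by rw [hall i hi]), Finset.sum_const, hcard,
        nsmul_eq_mul]
    rw [hL, hR]; linarith
  · push_neg at hall
    obtain ⟨i₀, hi₀, hne₀⟩ := hall
    have hbelow : ∃ i ∈ Finset.Icc 1 n, x i < xbar := by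
      by_contra h; push_neg at h
      have h2 := (Finset.sum_eq_zero_iff_of_nonneg
        (fun i hi => sub_nonneg.mpr (h i hi))).mp hsum0 i₀ hi₀
      exact hne₀ (by linarith [sub_eq_zero.mp h2])
    have habove : ∃ i ∈ Finset.Icc 1 n, xbar < x i := by
      by_contra h; push_neg at h
      have hsum0' : ∑ i ∈ Finset.Icc 1 n, (xbar - x i) = 0 := by
        have : ∀ i ∈ Finset.Icc 1 n, xbar - x i = -(x i - xbar) := fun i _ => by ring
        rw [Finset.sum_congr rfl this, Finset.sum_neg_distrib, hsum0, neg_zero]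
      have h2 := (Finset.sum_eq_zero_iff_of_nonneg
        (fun i hi => sub_nonneg.mpr (h i hi))).mp hsum0' i₀ hi₀
      exact hne₀ (by linarith [sub_eq_zero.mp h2])
    obtain ⟨iL, hiLmem, hiL⟩ := hbelow
    obtain ⟨iR, hiRmem, hiR⟩ := habove
    have haxbar : a < xbar := lt_of_le_of_lt (hx iL hiLmem).1 hiL
    have hxbarb : xbar < b := hxbarmem.2
    have hconv : ConvexOn ℝ (Set.Ico a b) f := by
      refine ⟨convex_Ico a b, ?_⟩
      intro p hp q hq s u hs hu hsu
      have h := hf p hp q hq s ⟨hs, by linarith⟩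
      have hnn : 0 ≤ s * (1 - s) * |p - q| ^ (2*r) :=
        mul_nonneg (mul_nonneg hs (by linarith)) (Real.rpow_nonneg (abs_nonneg _) _)
      have hu' : u = 1 - s := by linarith
      simp only [smul_eq_mul]
      rw [hu']
      linarith
    set S : Set ℝ := (fun z => (f xbar - f z)/(xbar - z)) '' Set.Ico a xbar with hS
    have hSne : S.Nonempty := ⟨_, ⟨a, ⟨le_refl a, haxbar⟩, rfl⟩⟩
    have hmemIco : ∀ z ∈ Set.Ico a xbar, z ∈ Set.Ico a b :=
      fun z hz => ⟨hz.1, lt_trans hz.2 hxbarb⟩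
    have hub : ∀ w ∈ Set.Ioo xbar b, ∀ y ∈ S, y ≤ (f w - f xbar)/(w - xbar) := by
      rintro w hw y ⟨z, hz, rfl⟩
      exact hconv.slope_mono_adjacent (hmemIco z hz)
        ⟨le_of_lt (lt_trans haxbar hw.1), hw.2⟩ hz.2 hw.1
    have hbddA : BddAbove S :=
      ⟨(f (x iR) - f xbar)/(x iR - xbar),
        fun y hy => hub (x iR) ⟨hiR, (hx iR hiRmem).2⟩ y hy⟩
    set g : ℝ := sSup S with hg
    have hgleft : ∀ z ∈ Set.Ico a xbar, (f xbar - f z)/(xbar - z) ≤ g :=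
      fun z hz => le_csSup hbddA ⟨z, hz, rfl⟩
    have hgright : ∀ w ∈ Set.Ioo xbar b, g ≤ (f w - f xbar)/(w - xbar) :=
      fun w hw => csSup_le hSne (fun y hy => hub w hw y hy)
    have hsub : ∀ z ∈ Set.Ico a b, f xbar + g * (z - xbar) ≤ f z := by
      intro z hz
      rcases lt_trichotomy z xbar with h|h|h
      · have h1 := hgleft z ⟨hz.1, h⟩
        rw [div_le_iff₀ (by linarith : (0:ℝ) < xbar - z)] at h1
        have h2 : g * (z - xbar) = -(g * (xbar - z)) := by ring
        linarith
      · rw [h]; simp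
      · have h1 := hgright z ⟨h, hz.2⟩
        rw [le_div_iff₀ (by linarith : (0:ℝ) < z - xbar)] at h1
        linarith
    have hpoint : ∀ i ∈ Finset.Icc 1 n,
        g * (x i - xbar) + |x i - xbar| ^ (2*r) ≤ f (x i) - f xbar := by
      intro i hi
      by_cases hxi : x i = xbar
      · rw [hxi]; simp [Real.zero_rpow (ne_of_gt hr2)]
      · set Φ := |x i - xbar| ^ (2*r) with hΦ
        have hΦ0 : 0 ≤ Φ := Real.rpow_nonneg (abs_nonneg _) _
        have hstep : ∀ t : ℝ, 0 < t → t < 1 →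
            g * (x i - xbar) + (1-t) * Φ ≤ f (x i) - f xbar := by
          intro t ht0 ht1
          have hxim := hx i hi
          have hzmem : t * x i + (1-t) * xbar ∈ Set.Ico a b := by
            constructor
            · nlinarith [hxim.1, hxbarmem.1]
            · nlinarith [hxim.2, hxbarmem.2]
          have h1 := hf (x i) hxim xbar hxbarmem t ⟨ht0.le, ht1.le⟩
          have h2 := hsub _ hzmem
          have hzeq : (t * x i + (1-t) * xbar) - xbar = t * (x i - xbar) := by ring
          rw [hzeq] at h2
          have hmul : t * (g * (x i - xbar) + (1-t)*Φ) ≤ t * (f (x i) - f xbar) := by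
            nlinarith [h1, h2]
          exact le_of_mul_le_mul_left hmul ht0
        refine le_of_forall_pos_le_add ?_
        intro ε hε
        have htpick : ∃ t:ℝ, 0 < t ∧ t < 1 ∧ t * Φ ≤ ε := by
          refine ⟨min (1/2) (ε/(Φ+1)), ?_, ?_, ?_⟩
          · apply lt_min (by norm_num) (by positivity)
          · exact lt_of_le_of_lt (min_le_left _ _) (by norm_num)
          · have h1 : min (1/2) (ε/(Φ+1)) ≤ ε/(Φ+1) := min_le_right _ _
            have h2 : min (1/2) (ε/(Φ+1)) * Φ ≤ (ε/(Φ+1)) * Φ :=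
              mul_le_mul_of_nonneg_right h1 hΦ0
            have h3 : (ε/(Φ+1)) * Φ ≤ ε := by
              rw [div_mul_eq_mul_div, div_le_iff₀ (by linarith : (0:ℝ) < Φ+1)]
              nlinarith
            linarith
        obtain ⟨t, ht0, ht1, htΦ⟩ := htpick
        have := hstep t ht0 ht1
        linarith
    have hsum := Finset.sum_le_sum hpoint
    rw [Finset.sum_add_distrib, ← Finset.mul_sum, hsum0, mul_zero, zero_add,
      Finset.sum_sub_distrib, Finset.sum_const, hcard, nsmul_eq_mul] at hsum
    linarith

/-- Corollary 1 b. (uniform weights): bound on the average of the `j` largest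
entries for `f` uniformly convex with modulus `Φ(x) = x^(2r)`. -/
theorem stmt_13 (a b : ℝ) (hab : a < b) (r : ℝ) (hr : 1 ≤ r)
    (f : ℝ → ℝ)
    (hf : ∀ x ∈ Set.Ico a b, ∀ y ∈ Set.Ico a b, ∀ s ∈ Set.Icc (0:ℝ) 1,
      f (s * x + (1 - s) * y) + s * (1 - s) * |x - y| ^ (2*r)
        ≤ s * f x + (1 - s) * f y)
    (n : ℕ) (hn : 2 ≤ n) (x : ℕ → ℝ)
    (hmono : ∀ i, 1 ≤ i → i ≤ n - 1 → x (i + 1) ≤ x i)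
    (hx : ∀ i ∈ Finset.Icc 1 n, x i ∈ Set.Ico a b)
    (xbar : ℝ) (hxbar : xbar = (1 / n) * ∑ i ∈ Finset.Icc 1 n, x i) :
    ∀ j, 1 ≤ j → j ≤ n - 1 →
      (1 / (j : ℝ)) * ∑ i ∈ Finset.Icc 1 j, x i ≤
        xbar + (((1 / n) * ∑ i ∈ Finset.Icc 1 n, |x i - xbar| ^ (2*r)) /
          ((j / n : ℝ) + ((j / n : ℝ)) ^ (2*r) * (1 - (j / n : ℝ)) ^ (1 - 2*r)))
            ^ (1/(2*r)) ∧
      xbar + (((1 / n) * ∑ i ∈ Finset.Icc 1 n, |x i - xbar| ^ (2*r)) /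
          ((j / n : ℝ) + ((j / n : ℝ)) ^ (2*r) * (1 - (j / n : ℝ)) ^ (1 - 2*r)))
            ^ (1/(2*r)) ≤
        xbar + ((((1 / n) * ∑ i ∈ Finset.Icc 1 n, f (x i)) - f xbar) /
          ((j / n : ℝ) + ((j / n : ℝ)) ^ (2*r) * (1 - (j / n : ℝ)) ^ (1 - 2*r)))
            ^ (1/(2*r)) := by
  intro j hj1 hj2
  have hn1 : 1 ≤ n := by omega
  have hjn : j < n := by omega
  have hN : (0:ℝ) < n := by exact_mod_cast (by omega : 0 < n)
  have hJ : (0:ℝ) < j := by exact_mod_cast hj1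
  have hJN : (j:ℝ) < (n:ℝ) := by exact_mod_cast hjn
  have hK : (0:ℝ) < (n:ℝ) - (j:ℝ) := by linarith
  have h2r1 : (1:ℝ) ≤ 2*r := by linarith
  have h2rpos : (0:ℝ) < 2*r := by linarith
  have h2rne : (2*r : ℝ) ≠ 0 := ne_of_gt h2rpos
  set t : ℝ := (j:ℝ)/(n:ℝ) with ht
  have ht0 : 0 < t := div_pos hJ hN
  have ht1 : t < 1 := (div_lt_one hN).mpr hJN
  set D : ℝ := t + t^(2*r) * (1-t)^(1-2*r) with hD
  have hDpos : 0 < D := by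
    have h1 : 0 < t^(2*r) := Real.rpow_pos_of_pos ht0 _
    have h2 : 0 < (1-t)^(1-2*r) := Real.rpow_pos_of_pos (by linarith) _
    nlinarith
  set S1 : ℝ := (1/(n:ℝ)) * ∑ i ∈ Finset.Icc 1 n, |x i - xbar| ^ (2*r) with hS1
  have hS1nonneg : 0 ≤ S1 :=
    mul_nonneg (by positivity)
      (Finset.sum_nonneg fun i _ => Real.rpow_nonneg (abs_nonneg _) _)
  have hxbar' : (n:ℝ) * xbar = ∑ i ∈ Finset.Icc 1 n, x i := by
    rw [hxbar]; field_simp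
  have hkey := key_jensen a b r hr f hf n hn1 x hx xbar hxbar'
  have hS12 : S1 ≤ (1/(n:ℝ)) * (∑ i ∈ Finset.Icc 1 n, f (x i)) - f xbar := by
    have h1 : (1/(n:ℝ)) * (∑ i ∈ Finset.Icc 1 n, |x i - xbar| ^ (2*r))
        ≤ (1/(n:ℝ)) * ((∑ i ∈ Finset.Icc 1 n, f (x i)) - n * f xbar) :=
      mul_le_mul_of_nonneg_left hkey (by positivity)
    have h2 : (1/(n:ℝ)) * ((∑ i ∈ Finset.Icc 1 n, f (x i)) - n * f xbar)
        = (1/(n:ℝ)) * (∑ i ∈ Finset.Icc 1 n, f (x i)) - f xbar := by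
      field_simp
    rw [hS1]; linarith
  constructor
  · -- first inequality
    set M : ℝ := (1 / (j : ℝ)) * ∑ i ∈ Finset.Icc 1 j, x i with hM
    rcases le_or_gt M xbar with hy | hy
    · exact le_trans hy (le_add_of_nonneg_right
        (Real.rpow_nonneg (div_nonneg hS1nonneg hDpos.le) _))
    · set y : ℝ := M - xbar with hyd
      have hy0 : 0 < y := by simp [hyd]; linarith
      have hcard1 : (Finset.Icc 1 j).card = j := by rw [Nat.card_Icc]; omega
      have hcard2 : (Finset.Icc (j+1) n).card = n - j := by rw [Nat.card_Icc]; omega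
      have hne1 : (Finset.Icc 1 j).Nonempty := Finset.nonempty_Icc.mpr hj1
      have hne2 : (Finset.Icc (j+1) n).Nonempty := Finset.nonempty_Icc.mpr (by omega)
      have hunion : Finset.Icc 1 j ∪ Finset.Icc (j+1) n = Finset.Icc 1 n := by
        ext k; simp only [Finset.mem_union, Finset.mem_Icc]; omega
      have hdisj : Disjoint (Finset.Icc 1 j) (Finset.Icc (j+1) n) := by
        simp only [Finset.disjoint_left, Finset.mem_Icc]; omega
      have hsplit : ∀ F : ℕ → ℝ, ∑ i ∈ Finset.Icc 1 n, F i =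
          ∑ i ∈ Finset.Icc 1 j, F i + ∑ i ∈ Finset.Icc (j+1) n, F i := by
        intro F; rw [← hunion, Finset.sum_union hdisj]
      have hsumdn : ∑ i ∈ Finset.Icc 1 n, (x i - xbar) = 0 := by
        rw [Finset.sum_sub_distrib, Finset.sum_const, (by rw [Nat.card_Icc]; omega :
          (Finset.Icc 1 n).card = n), nsmul_eq_mul, ← hxbar', sub_self]
      have hsumd1 : ∑ i ∈ Finset.Icc 1 j, (x i - xbar) = (j:ℝ) * y := by
        rw [Finset.sum_sub_distrib, Finset.sum_const, hcard1, nsmul_eq_mul, hyd, hM]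
        field_simp
      have hsumd2 : ∑ i ∈ Finset.Icc (j+1) n, (x i - xbar) = -((j:ℝ) * y) := by
        have := hsplit (fun i => x i - xbar)
        rw [hsumdn, hsumd1] at this; linarith
      -- part 1
      have hp1 := aux_mean (Finset.Icc 1 j) hne1 (fun i => x i - xbar) (2*r) h2r1
      have hcancel : ((j:ℝ)*y)/(j:ℝ) = y := by field_simp
      rw [hcard1, hsumd1, hcancel, abs_of_pos hy0] at hp1
      -- part 2
      have hp2 := aux_mean (Finset.Icc (j+1) n) hne2 (fun i => x i - xbar) (2*r) h2r1
      have hcast2 : ((n - j : ℕ) : ℝ) = (n:ℝ) - (j:ℝ) := by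
        rw [Nat.cast_sub (le_of_lt hjn)]
      rw [hcard2, hcast2, hsumd2] at hp2
      have habs2 : |(-((j:ℝ) * y)) / ((n:ℝ) - (j:ℝ))| = ((j:ℝ) * y) / ((n:ℝ) - (j:ℝ)) := by
        rw [abs_div, abs_neg, abs_of_pos (mul_pos hJ hy0), abs_of_pos hK]
      rw [habs2] at hp2
      -- identity
      have e1 : t^(2*r) = (j:ℝ)^(2*r)/(n:ℝ)^(2*r) := by
        rw [ht, Real.div_rpow hJ.le hN.le]
      have e2 : (1:ℝ) - t = ((n:ℝ) - (j:ℝ))/(n:ℝ) := by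
        rw [ht]; field_simp
      have e3 : (1-t)^(1-2*r) = ((n:ℝ)-(j:ℝ))^(1-2*r)/(n:ℝ)^(1-2*r) := by
        rw [e2, Real.div_rpow hK.le hN.le]
      have e4 : ((n:ℝ)-(j:ℝ))^(1-2*r) = ((n:ℝ)-(j:ℝ))/((n:ℝ)-(j:ℝ))^(2*r) := by
        rw [Real.rpow_sub hK, Real.rpow_one]
      have e5 : (n:ℝ)^(2*r) * (n:ℝ)^(1-2*r) = (n:ℝ) := by
        rw [← Real.rpow_add hN]; norm_num
      have e6 : (((j:ℝ)*y)/((n:ℝ)-(j:ℝ)))^(2*r) = ((j:ℝ)*y)^(2*r)/((n:ℝ)-(j:ℝ))^(2*r) :=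
        Real.div_rpow (mul_pos hJ hy0).le hK.le (2*r)
      have e7 : ((j:ℝ)*y)^(2*r) = (j:ℝ)^(2*r)*y^(2*r) := Real.mul_rpow hJ.le hy0.le
      have hNt : (n:ℝ) * t = (j:ℝ) := by rw [ht]; field_simp
      have hterm : (n:ℝ) * (t^(2*r)*(1-t)^(1-2*r))
          = (j:ℝ)^(2*r) * ((n:ℝ)-(j:ℝ))^(1-2*r) := by
        rw [e1, e3, div_mul_div_comm, e5]
        field_simp
      have hid : (n:ℝ) * (D * y^(2*r)) =
          (j:ℝ) * y^(2*r) + ((n:ℝ)-(j:ℝ)) * (((j:ℝ)*y)/((n:ℝ)-(j:ℝ)))^(2*r) := by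
        rw [e6, e7, hD]
        have hK2r : (((n:ℝ)-(j:ℝ))^(2*r)) ≠ 0 := (Real.rpow_pos_of_pos hK _).ne'
        have expand : (n:ℝ) * ((t + t^(2*r) * (1-t)^(1-2*r)) * y^(2*r))
            = ((n:ℝ)*t) * y^(2*r) + ((n:ℝ) * (t^(2*r)*(1-t)^(1-2*r))) * y^(2*r) := by ring
        rw [expand, hNt, hterm, e4]
        field_simp
      have hsum12 : (n:ℝ) * (D * y^(2*r)) ≤ ∑ i ∈ Finset.Icc 1 n, |x i - xbar| ^ (2*r) := by
        rw [hid, hsplit (fun i => |x i - xbar| ^ (2*r))]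
        exact add_le_add hp1 hp2
      have hDyS1 : D * y^(2*r) ≤ S1 := by
        rw [hS1]
        have h := mul_le_mul_of_nonneg_left hsum12 (by positivity : (0:ℝ) ≤ 1/(n:ℝ))
        calc D*y^(2*r) = (1/(n:ℝ)) * ((n:ℝ) * (D*y^(2*r))) := by field_simp
          _ ≤ 1/(n:ℝ) * ∑ i ∈ Finset.Icc 1 n, |x i - xbar| ^ (2*r) := h
      have hyrle : y^(2*r) ≤ S1/D := (le_div_iff₀ hDpos).mpr (by linarith)
      have hyeq : (y^(2*r))^(1/(2*r)) = y := by
        rw [← Real.rpow_mul hy0.le, mul_one_div, div_self h2rne, Real.rpow_one]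
      have hfin : y ≤ (S1/D)^(1/(2*r)) := by
        rw [← hyeq]
        exact Real.rpow_le_rpow (Real.rpow_nonneg hy0.le _) hyrle (by positivity)
      have : M ≤ xbar + (S1/D)^(1/(2*r)) := by rw [hyd] at hfin; linarith
      exact this
  · -- second inequality
    have h1 : (S1 / D)^(1/(2*r)) ≤
        ((((1/(n:ℝ)) * ∑ i ∈ Finset.Icc 1 n, f (x i)) - f xbar) / D)^(1/(2*r)) :=
      Real.rpow_le_rpow (div_nonneg hS1nonneg hDpos.le)
        ((div_le_div_iff_of_pos_right hDpos).mpr hS12) (by positivity)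
    linarith
end
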